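/- arXiv:1403.2616 — 9 statements merged into one kernel-verified Lean document; each statement's English description precedes it below -/
import Mathlib

section
/- Let S: X → X and T: Y → Y be bijections of sets X and Y, and suppose f: X → Y and g: Y → X are injective maps satisfying f ∘ S = T ∘ f and g ∘ T = S ∘ g. If moreover S(X) = X and T(Y) = Y, then there exists a bijection h: X → Y with h ∘ S = T ∘ h, given on a suitable S-invariant subset A ⊆ X by h = f on A and h = g⁻¹ on X \ A. -/
/-!
The Cantor–Bernstein bijection is `f` on the set `A = ⋃ n, (g ∘ f)^[n] '' (range g)ᶜ` of
points whose backward `g ∘ f`-chain stops outside `range g`, and `g⁻¹` off `A` (the paper's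
set also contains `⋂ n, (g ∘ f)^[n] '' univ`; the argument works for either choice). Because
`f` and `g` intertwine `S` and `T`, the map `S` commutes with `g ∘ f` and, `T` being onto, maps
`range g` onto itself; as `S` is bijective this gives `S ⁻¹' A = A`, so `S` preserves both `A`
and its complement, and on each piece the bijection is visibly equivariant.
-/

open Function Set

section CantorBernstein

variable {X Y : Type*} (f : X → Y) (g : Y → X)

def cantorBernsteinSet : Set X :=
  ⋃ n, (g ∘ f)^[n] '' (range g)ᶜ

open Classical in
noncomputable def cantorBernsteinMap (x : X) : Y :=
  haveI : Nonempty Y := ⟨f x⟩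
  if x ∈ cantorBernsteinSet f g then f x else invFun g x

variable {f g}

theorem range_compl_subset_cantorBernsteinSet : (range g)ᶜ ⊆ cantorBernsteinSet f g :=
  subset_iUnion_of_subset 0 (image_id _).superset

theorem mapsTo_cantorBernsteinSet :
    MapsTo (g ∘ f) (cantorBernsteinSet f g) (cantorBernsteinSet f g) := by
  rintro _ ⟨_, ⟨n, rfl⟩, x, hx, rfl⟩
  exact mem_iUnion.2 ⟨n + 1, x, hx, iterate_succ_apply' _ _ _⟩

theorem exists_mem_cantorBernsteinSet_of_apply_mem (hg : Injective g) {y : Y}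
    (hy : g y ∈ cantorBernsteinSet f g) : ∃ x ∈ cantorBernsteinSet f g, f x = y := by
  obtain ⟨_, ⟨n, rfl⟩, c, hc, hcy⟩ := hy
  cases n with
  | zero => exact absurd ⟨y, hcy.symm⟩ hc
  | succ n =>
    rw [iterate_succ_apply'] at hcy
    exact ⟨_, mem_iUnion.2 ⟨n, c, hc, rfl⟩, hg hcy⟩

theorem cantorBernsteinMap_of_mem {x : X} (hx : x ∈ cantorBernsteinSet f g) :
    cantorBernsteinMap f g x = f x :=
  if_pos hx

theorem apply_cantorBernsteinMap_of_notMem {x : X} (hx : x ∉ cantorBernsteinSet f g) :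
    g (cantorBernsteinMap f g x) = x := by
  have : Nonempty Y := ⟨f x⟩
  rw [cantorBernsteinMap, if_neg hx]
  exact invFun_eq (not_not.1 fun h => hx (range_compl_subset_cantorBernsteinSet h))

theorem cantorBernsteinMap_injective (hf : Injective f) : Injective (cantorBernsteinMap f g) := by
  have mixed : ∀ {a b}, a ∈ cantorBernsteinSet f g → b ∉ cantorBernsteinSet f g →
      cantorBernsteinMap f g a ≠ cantorBernsteinMap f g b := by
    intro a b ha hb hab
    apply hb
    rw [← apply_cantorBernsteinMap_of_notMem hb, ← hab, cantorBernsteinMap_of_mem ha]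
    exact mapsTo_cantorBernsteinSet ha
  intro a b hab
  by_cases ha : a ∈ cantorBernsteinSet f g <;> by_cases hb : b ∈ cantorBernsteinSet f g
  · rw [cantorBernsteinMap_of_mem ha, cantorBernsteinMap_of_mem hb] at hab
    exact hf hab
  · exact absurd hab (mixed ha hb)
  · exact absurd hab.symm (mixed hb ha)
  · rw [← apply_cantorBernsteinMap_of_notMem ha, hab, apply_cantorBernsteinMap_of_notMem hb]

theorem cantorBernsteinMap_surjective (hg : Injective g) : Surjective (cantorBernsteinMap f g) := by
  intro y
  by_cases hy : g y ∈ cantorBernsteinSet f g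
  · obtain ⟨x, hx, rfl⟩ := exists_mem_cantorBernsteinSet_of_apply_mem hg hy
    exact ⟨x, cantorBernsteinMap_of_mem hx⟩
  · exact ⟨g y, hg (apply_cantorBernsteinMap_of_notMem hy)⟩

theorem cantorBernsteinMap_bijective (hf : Injective f) (hg : Injective g) :
    Bijective (cantorBernsteinMap f g) :=
  ⟨cantorBernsteinMap_injective hf, cantorBernsteinMap_surjective hg⟩

variable {S : X → X} {T : Y → Y}

theorem image_cantorBernsteinSet_eq (hS : Function.Commute (g ∘ f) S)
    (hrange : S '' (range g)ᶜ = (range g)ᶜ) :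
    S '' cantorBernsteinSet f g = cantorBernsteinSet f g := by
  simp only [cantorBernsteinSet, image_iUnion]
  refine iUnion_congr fun n => ?_
  rw [← (hS.iterate_left n).set_image (range g)ᶜ, hrange]

theorem cantorBernsteinMap_semiconj (hg : Injective g) (hfS : Semiconj f S T)
    (hgT : Semiconj g T S) (hA : S ⁻¹' cantorBernsteinSet f g = cantorBernsteinSet f g) :
    Semiconj (cantorBernsteinMap f g) S T := by
  intro x
  by_cases hx : x ∈ cantorBernsteinSet f g
  · have hSx : S x ∈ cantorBernsteinSet f g := (Set.ext_iff.1 hA x).2 hx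
    rw [cantorBernsteinMap_of_mem hx, cantorBernsteinMap_of_mem hSx, hfS]
  · have hSx : S x ∉ cantorBernsteinSet f g := mt (Set.ext_iff.1 hA x).1 hx
    apply hg
    rw [apply_cantorBernsteinMap_of_notMem hSx, hgT, apply_cantorBernsteinMap_of_notMem hx]

end CantorBernstein

/-- Dynamical (equivariant) Cantor–Bernstein: mutual equivariant injections
between two invertible systems yield an equivariant bijection, equal to `f`
on a suitable `S`-invariant set `A` and to `g⁻¹` off `A`. -/
theorem stmt0 {X Y : Type*} (S : X → X) (T : Y → Y) (f : X → Y) (g : Y → X)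
    (hS : Function.Bijective S) (hT : Function.Bijective T)
    (hf : Function.Injective f) (hg : Function.Injective g)
    (hfS : ∀ x, f (S x) = T (f x)) (hgT : ∀ y, g (T y) = S (g y)) :
    ∃ (A : Set X) (h : X → Y), (∀ x ∈ A, S x ∈ A) ∧ Function.Bijective h ∧
      (∀ x, h (S x) = T (h x)) ∧ (∀ x ∈ A, h x = f x) ∧ (∀ x ∉ A, g (h x) = x) := by
  have hrange : S '' (range g)ᶜ = (range g)ᶜ := by
    rw [image_compl_eq hS, ← range_comp, ← Semiconj.comp_eq hgT, hT.2.range_comp]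
  have hA : S ⁻¹' cantorBernsteinSet f g = cantorBernsteinSet f g :=
    (preimage_eq_iff_eq_image hS).2
      (image_cantorBernsteinSet_eq (Semiconj.comp_left hgT hfS) hrange).symm
  exact ⟨cantorBernsteinSet f g, cantorBernsteinMap f g, fun x hx => (Set.ext_iff.1 hA x).2 hx,
    cantorBernsteinMap_bijective hf hg, cantorBernsteinMap_semiconj hg hfS hgT hA,
    fun _ => cantorBernsteinMap_of_mem, fun _ => apply_cantorBernsteinMap_of_notMem⟩
end

section
/- Let (X, S, μ) be an ergodic measure-preserving invertible system and A a measurable set with μ(A) > 0. Let τ_A(x) = inf{n ≥ 1 : Sⁿx ∈ A} be the first return time. If every return time of points of A to A is a multiple of p (i.e., τ_A(x) ∈ pℕ for a.e. x ∈ A), then p is a period of (S, μ): there exist measurable sets A₀, …, A_{p−1} partitioning X modulo μ with S(Aᵢ) = A_{i+1 mod p} modulo μ. -/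
/-!
Ergodicity makes almost every point enter `A`, so the first return time `τ` is positive a.e.
Along an orbit `τ` drops by one at each step until the orbit reaches `A`, where it restarts at
a multiple of `p`; hence `-τ mod p` is a phase that `S` increases by one a.e. Its level sets are
the cyclically moving partition; pulling them back by `S` makes their images under `S` exact,
which avoids any measurability question about `S⁻¹`.
-/

open MeasureTheory symmDiff

section

variable {X : Type*}

/-- `τ_A`, with the junk value `0` at points whose forward orbit never enters `A`. -/
noncomputable def firstReturnTime (S : X → X) (A : Set X) (x : X) : ℕ :=
  sInf {n | 0 < n ∧ S^[n] x ∈ A}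

section FirstReturnTime

variable {S : X → X} {A : Set X} {x : X} {n : ℕ}

theorem firstReturnTime_pos_iff : 0 < firstReturnTime S A x ↔ ∃ n, 0 < n ∧ S^[n] x ∈ A := by
  refine ⟨fun h => ?_, fun hx => (Nat.sInf_mem hx).1⟩
  by_contra hne
  rw [firstReturnTime, Set.eq_empty_of_forall_notMem fun n hn => hne ⟨n, hn⟩] at h
  exact lt_irrefl 0 (Nat.sInf_empty ▸ h)

theorem iterate_firstReturnTime_mem (h : 0 < firstReturnTime S A x) :
    S^[firstReturnTime S A x] x ∈ A :=
  (Nat.sInf_mem (firstReturnTime_pos_iff.1 h)).2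

theorem iterate_notMem_of_lt_firstReturnTime {m : ℕ} (hm : 0 < m)
    (h : m < firstReturnTime S A x) : S^[m] x ∉ A :=
  fun hA => Nat.notMem_of_lt_sInf h ⟨hm, hA⟩

theorem firstReturnTime_eq_iff (hn : 0 < n) :
    firstReturnTime S A x = n ↔ S^[n] x ∈ A ∧ ∀ m, 0 < m → m < n → S^[m] x ∉ A := by
  constructor
  · rintro rfl
    exact ⟨iterate_firstReturnTime_mem hn, fun _ => iterate_notMem_of_lt_firstReturnTime⟩
  · rintro ⟨hA, hmin⟩
    have hle : firstReturnTime S A x ≤ n := Nat.sInf_le ⟨hn, hA⟩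
    have hpos : 0 < firstReturnTime S A x := firstReturnTime_pos_iff.2 ⟨n, hn, hA⟩
    by_contra hne
    exact hmin _ hpos (lt_of_le_of_ne hle hne) (iterate_firstReturnTime_mem hpos)

theorem measurable_firstReturnTime [MeasurableSpace X] (hS : Measurable S)
    (hA : MeasurableSet A) : Measurable (firstReturnTime S A) := by
  have hiter : ∀ m, MeasurableSet (S^[m] ⁻¹' A) := fun m => hS.iterate m hA
  refine measurable_to_countable' fun n => ?_
  rcases n.eq_zero_or_pos with rfl | hn
  · have : firstReturnTime S A ⁻¹' {0} = (⋃ m, ⋃ (_ : 0 < m), S^[m] ⁻¹' A)ᶜ := by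
      ext x
      simp only [Set.mem_preimage, Set.mem_singleton_iff, Set.mem_compl_iff, Set.mem_iUnion,
        exists_prop, ← firstReturnTime_pos_iff]
      omega
    rw [this]
    exact (MeasurableSet.iUnion fun m => .iUnion fun _ => hiter m).compl
  · have : firstReturnTime S A ⁻¹' {n} =
        S^[n] ⁻¹' A ∩ ⋂ m, ⋂ (_ : 0 < m), ⋂ (_ : m < n), (S^[m] ⁻¹' A)ᶜ := by
      ext x
      simp [firstReturnTime_eq_iff hn]
    rw [this]
    exact (hiter n).inter (.iInter fun m => .iInter fun _ => .iInter fun _ => (hiter m).compl)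

theorem firstReturnTime_apply_add_one (h : 1 < firstReturnTime S A x) :
    firstReturnTime S A (S x) + 1 = firstReturnTime S A x := by
  have hpos : 0 < firstReturnTime S A x := by omega
  suffices firstReturnTime S A (S x) = firstReturnTime S A x - 1 by omega
  refine (firstReturnTime_eq_iff (by omega)).2 ⟨?_, fun m hm hlt hmA => ?_⟩
  · rw [← Function.iterate_succ_apply, Nat.succ_eq_add_one, Nat.sub_add_cancel hpos]
    exact iterate_firstReturnTime_mem hpos
  · rw [← Function.iterate_succ_apply] at hmA
    exact iterate_notMem_of_lt_firstReturnTime (Nat.succ_pos m) (by omega) hmA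

theorem natCast_firstReturnTime_eq {p : ℕ} (hx : 0 < firstReturnTime S A x)
    (hdvd : S x ∈ A → p ∣ firstReturnTime S A (S x)) :
    (firstReturnTime S A x : ZMod p) = firstReturnTime S A (S x) + 1 := by
  rcases (Nat.one_le_iff_ne_zero.2 hx.ne').eq_or_lt with h | h
  · have hSx : S x ∈ A := by simpa [← h] using iterate_firstReturnTime_mem hx
    rw [← h, (ZMod.natCast_eq_zero_iff _ _).2 (hdvd hSx)]
    simp
  · rw [← firstReturnTime_apply_add_one h, Nat.cast_succ]

theorem dvd_firstReturnTime {p : ℕ}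
    (h : ∀ n, 0 < n → S^[n] x ∈ A → (∀ m, 0 < m → m < n → S^[m] x ∉ A) → p ∣ n) :
    p ∣ firstReturnTime S A x := by
  rcases (firstReturnTime S A x).eq_zero_or_pos with h0 | hpos
  · rw [h0]
    exact dvd_zero p
  · exact h _ hpos (iterate_firstReturnTime_mem hpos)
      fun m hm hlt => iterate_notMem_of_lt_firstReturnTime hm hlt

end FirstReturnTime

namespace Ergodic

variable [MeasurableSpace X] {S : X → X} {μ : Measure X}
  [IsFiniteMeasure μ] {A : Set X}

theorem ae_firstReturnTime_pos (hS : Ergodic S μ) (hA : MeasurableSet A) (hpos : 0 < μ A) :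
    ∀ᵐ x ∂μ, 0 < firstReturnTime S A x := by
  set H := {x | 0 < firstReturnTime S A x}
  have hH : MeasurableSet H := measurable_firstReturnTime hS.measurable hA .of_discrete
  have hinv : S ⁻¹' H ⊆ H := fun x hx => by
    obtain ⟨n, hn, hnA⟩ := firstReturnTime_pos_iff.1 hx
    exact firstReturnTime_pos_iff.2 ⟨n + 1, n.succ_pos, hnA⟩
  have hAH : S ⁻¹' A ⊆ H := fun x hx => firstReturnTime_pos_iff.2 ⟨1, one_pos, hx⟩
  rcases hS.ae_empty_or_univ_of_preimage_ae_le hH.nullMeasurableSet hinv.eventuallyLE with h | h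
  · have hSA : μ (S ⁻¹' A) ≠ 0 := hS.measure_preimage hA.nullMeasurableSet ▸ hpos.ne'
    exact absurd (measure_mono_null hAH (by rw [measure_congr h, measure_empty])) hSA
  · exact ae_iff.2 (ae_eq_univ.1 h)

theorem ae_natCast_firstReturnTime_eq (hS : Ergodic S μ) (hA : MeasurableSet A)
    (hpos : 0 < μ A) {p : ℕ} (hret : ∀ᵐ x ∂μ, x ∈ A → p ∣ firstReturnTime S A x) :
    ∀ᵐ x ∂μ, (firstReturnTime S A x : ZMod p) = firstReturnTime S A (S x) + 1 := by
  filter_upwards [hS.ae_firstReturnTime_pos hA hpos,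
    hS.toMeasurePreserving.quasiMeasurePreserving.ae hret] with x hx hSx
  exact natCast_firstReturnTime_eq hx hSx

end Ergodic

theorem exists_cyclic_partition_of_ae_map_eq_add_one [MeasurableSpace X]
    {μ : Measure X} {S : X → X} {p : ℕ} [NeZero p] (hS : Function.Surjective S)
    (hSm : Measurable S) {φ : X → ZMod p} (hφ : Measurable φ)
    (h : ∀ᵐ x ∂μ, φ (S x) = φ x + 1) :
    ∃ B : ℕ → Set X, (∀ i, MeasurableSet (B i)) ∧
      μ (Set.univ \ ⋃ i ∈ Finset.range p, B i) = 0 ∧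
      (∀ i < p, ∀ j < p, i ≠ j → μ (B i ∩ B j) = 0) ∧
      ∀ i < p, μ ((S '' B i) ∆ (B ((i + 1) % p))) = 0 := by
  have hlevel : ∀ c : ZMod p, φ ⁻¹' {c} =ᵐ[μ] S ⁻¹' (φ ⁻¹' {c + 1}) := fun c =>
    Filter.eventuallyEq_set.2 <| h.mono fun x hx => by
      change φ x = c ↔ φ (S x) = c + 1
      rw [hx, add_left_inj]
  set B : ℕ → Set X := fun i => S ⁻¹' (φ ⁻¹' {(i : ZMod p) + 1})
  refine ⟨B, fun i => hSm (hφ .of_discrete), ?_, ?_, ?_⟩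
  · suffices ⋃ i ∈ Finset.range p, B i = Set.univ by
      rw [this, Set.sdiff_self, measure_empty]
    refine Set.eq_univ_of_forall fun x => Set.mem_biUnion
      (Finset.mem_range.2 (φ (S x) - 1).val_lt) ?_
    simp [B]
  · intro i hi j hj hij
    suffices B i ∩ B j = ∅ by
      rw [this, measure_empty]
    refine Set.eq_empty_of_forall_notMem fun x ⟨hxi, hxj⟩ => hij ?_
    have : (i : ZMod p) = j := add_right_cancel (hxi.symm.trans hxj)
    rwa [ZMod.natCast_eq_natCast_iff', Nat.mod_eq_of_lt hi, Nat.mod_eq_of_lt hj] at this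
  · intro i _
    rw [Set.image_preimage_eq _ hS]
    simp only [B, ZMod.natCast_mod, Nat.cast_succ]
    exact measure_symmDiff_eq_zero_iff.2 (hlevel _)

end

/-- If all first-return times of an ergodic invertible system to a positive-measure
set `A` are multiples of `p`, then `p` is a period: there is a `p`-cyclically moving
measurable partition modulo `μ`. -/
theorem stmt1 {X : Type*} [MeasurableSpace X] (S : X → X) (μ : Measure X)
    [IsProbabilityMeasure μ] (hS : Function.Bijective S) (hErg : Ergodic S μ)
    (A : Set X) (hA : MeasurableSet A) (hpos : 0 < μ A) (p : ℕ) (hp : 1 ≤ p)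
    (hret : ∀ᵐ x ∂μ, x ∈ A → ∀ n, 1 ≤ n → S^[n] x ∈ A →
      (∀ m, 1 ≤ m → m < n → S^[m] x ∉ A) → p ∣ n) :
    ∃ B : ℕ → Set X, (∀ i, MeasurableSet (B i)) ∧
      μ (Set.univ \ ⋃ i ∈ Finset.range p, B i) = 0 ∧
      (∀ i < p, ∀ j < p, i ≠ j → μ (B i ∩ B j) = 0) ∧
      ∀ i < p, μ ((S '' B i) ∆ (B ((i + 1) % p))) = 0 := by
  have : NeZero p := ⟨by omega⟩
  have hdvd : ∀ᵐ x ∂μ, x ∈ A → p ∣ firstReturnTime S A x :=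
    hret.mono fun x hx hxA => dvd_firstReturnTime (hx hxA)
  refine exists_cyclic_partition_of_ae_map_eq_add_one hS.surjective hErg.measurable
    (φ := fun x => -(firstReturnTime S A x : ZMod p))
    ((measurable_from_nat (f := fun n => -(n : ZMod p))).comp
      (measurable_firstReturnTime hErg.measurable hA)) ?_
  filter_upwards [hErg.ae_natCast_firstReturnTime_eq hA hpos hdvd] with x hx
  rw [hx]
  ring
end

section
/- Let (X, S, μ) be an ergodic invertible measure-preserving system with period q (i.e., there is a measurable X₀ with S^q(X₀) = X₀ and X₀, S(X₀), …, S^{q−1}(X₀) disjoint with union of full measure). Then any measurable set A with μ(A) > 0 contains a measurable subset B with μ(B) > 0 such that the greatest common divisor of the return times τ_B(B) is a multiple of q and is itself a period of (S, μ). -/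
/-!
Pick `k < q` such that `B₁ = A ∩ S⁻ᵏ X₀` has positive measure. Since `X₀ ∩ S⁻ⁿ X₀` is null
unless `q ∣ n`, the set `R` of times `n` with `μ (B₁ ∩ S⁻ⁿ B₁) > 0` consists of multiples of `q`,
and it contains a positive time by Poincaré recurrence; let `d = gcd R`, so `q ∣ d`. Removing
from `B₁` the null set of points that return to `B₁` at a time not divisible by `d` gives `B`:
all its return times are multiples of `d`, while its essential return times are still `R`, so `d`
is the gcd of its first return times. By ergodicity almost every orbit visits `B` infinitely
often, at times that are all congruent mod `d`; sorting points by the residue of minus their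
visit times gives `d` sets that `S` permutes cyclically.
-/

open MeasureTheory symmDiff Filter Function

section Returns

variable {X : Type*} {S : X → X} {B : Set X} {x : X} {d : ℕ}

lemma dvd_of_dvd_firstReturn {c : ℕ}
    (hc : ∀ n, 1 ≤ n → (∃ x ∈ B, S^[n] x ∈ B ∧ ∀ m, 1 ≤ m → m < n → S^[m] x ∉ B) → c ∣ n)
    {n : ℕ} (hx : x ∈ B) (hn : S^[n] x ∈ B) : c ∣ n := by
  classical
  induction n using Nat.strong_induction_on generalizing x with
  | _ n ih =>
  rcases Nat.eq_zero_or_pos n with rfl | hpos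
  · exact dvd_zero c
  have hret : ∃ m, 1 ≤ m ∧ S^[m] x ∈ B := ⟨n, hpos, hn⟩
  obtain ⟨hm1, hmB⟩ := Nat.find_spec hret
  have hmn : Nat.find hret ≤ n := Nat.find_min' hret ⟨hpos, hn⟩
  have hfirst : c ∣ Nat.find hret :=
    hc _ hm1 ⟨x, hx, hmB, fun k hk1 hkm hkB => Nat.find_min hret hkm ⟨hk1, hkB⟩⟩
  have hrest : c ∣ n - Nat.find hret :=
    ih _ (by omega) hmB (by rwa [← iterate_add_apply, Nat.sub_add_cancel hmn])
  simpa [Nat.sub_add_cancel hmn] using dvd_add hrest hfirst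

lemma modEq_of_iterate_mem (hret : ∀ y ∈ B, ∀ n, S^[n] y ∈ B → d ∣ n) {m n : ℕ}
    (hm : S^[m] x ∈ B) (hn : S^[n] x ∈ B) : m ≡ n [MOD d] := by
  wlog hmn : m ≤ n generalizing m n
  · exact (this hn hm (le_of_not_ge hmn)).symm
  refine (Nat.modEq_iff_dvd' hmn).2 (hret _ hm _ ?_)
  rwa [← iterate_add_apply, Nat.sub_add_cancel hmn]

def phaseSet (S : X → X) (B : Set X) (d i : ℕ) : Set X :=
  {x | ∃ n, S^[n] x ∈ B ∧ d ∣ n + i}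

lemma phaseSet_mod (i : ℕ) : phaseSet S B d (i % d) = phaseSet S B d i := by
  ext x
  refine exists_congr fun n => and_congr_right fun _ => ?_
  exact ((Nat.mod_modEq i d).add_left n).dvd_iff dvd_rfl

lemma measurableSet_phaseSet [MeasurableSpace X] (hS : Measurable S) (hB : MeasurableSet B)
    (d i : ℕ) : MeasurableSet (phaseSet S B d i) := by
  have : phaseSet S B d i = ⋃ n, ⋃ (_ : d ∣ n + i), S^[n] ⁻¹' B := by ext; simp [phaseSet, and_comm]
  rw [this]
  exact .iUnion fun n => .iUnion fun _ => hS.iterate n hB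

lemma exists_mem_phaseSet (hd : 0 < d) {n : ℕ} (hn : S^[n] x ∈ B) :
    ∃ i < d, x ∈ phaseSet S B d i := by
  refine ⟨(d - 1) * n % d, Nat.mod_lt _ hd, ?_⟩
  rw [phaseSet_mod]
  refine ⟨n, hn, n, ?_⟩
  obtain ⟨e, rfl⟩ := Nat.exists_eq_add_of_lt hd
  simp only [Nat.zero_add, Nat.add_sub_cancel]
  ring

lemma eq_of_mem_phaseSet (hret : ∀ y ∈ B, ∀ n, S^[n] y ∈ B → d ∣ n) {i j : ℕ} (hi : i < d)
    (hj : j < d) (hxi : x ∈ phaseSet S B d i) (hxj : x ∈ phaseSet S B d j) : i = j := by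
  obtain ⟨m, hm, hmi⟩ := hxi
  obtain ⟨n, hn, hnj⟩ := hxj
  have : m + i ≡ n + j [MOD d] :=
    (Nat.modEq_zero_iff_dvd.2 hmi).trans (Nat.modEq_zero_iff_dvd.2 hnj).symm
  exact ((modEq_of_iterate_mem hret hm hn).add_left_cancel this).eq_of_lt_of_lt hi hj

lemma apply_mem_phaseSet_succ_iff (hret : ∀ y ∈ B, ∀ n, S^[n] y ∈ B → d ∣ n) {i m : ℕ}
    (hm : 1 ≤ m) (hxm : S^[m] x ∈ B) :
    S x ∈ phaseSet S B d (i + 1) ↔ x ∈ phaseSet S B d i := by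
  constructor
  · rintro ⟨n, hn, hdvd⟩
    exact ⟨n + 1, by rwa [iterate_succ_apply], by rwa [add_right_comm, add_assoc]⟩
  · rintro ⟨n, hn, hdvd⟩
    refine ⟨m - 1, by rwa [← iterate_succ_apply, Nat.succ_eq_add_one, Nat.sub_add_cancel hm], ?_⟩
    rw [show m - 1 + (i + 1) = m + i by omega]
    exact (((modEq_of_iterate_mem hret hxm hn).add_right i).dvd_iff dvd_rfl).2 hdvd

end Returns

lemma frequently_iterate_apply_mem_iff {X : Type*} {f : X → X} {s : Set X} {x : X} :
    (∃ᶠ n in atTop, f^[n] (f x) ∈ s) ↔ ∃ᶠ n in atTop, f^[n] x ∈ s := by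
  conv_rhs => rw [← map_add_atTop_eq_nat 1, frequently_map]
  simp only [iterate_succ_apply]

lemma measurableSet_setOf_frequently_iterate_mem {X : Type*} [MeasurableSpace X] {f : X → X}
    {s : Set X} (hf : Measurable f) (hs : MeasurableSet s) :
    MeasurableSet {x | ∃ᶠ n in atTop, f^[n] x ∈ s} := by
  have : {x | ∃ᶠ n in atTop, f^[n] x ∈ s} = limsup (fun n => f^[n] ⁻¹' s) atTop := by
    ext; simp [mem_limsup_iff_frequently_mem]
  rw [this]
  exact .measurableSet_limsup fun n => hf.iterate n hs

lemma Ergodic.ae_frequently_iterate_mem {X : Type*} [MeasurableSpace X] {μ : Measure X}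
    [IsFiniteMeasure μ] {f : X → X} {s : Set X} (hf : Ergodic f μ) (hs : MeasurableSet s)
    (h0 : μ s ≠ 0) : ∀ᵐ x ∂μ, ∃ᶠ n in atTop, f^[n] x ∈ s := by
  set G := {x | ∃ᶠ n in atTop, f^[n] x ∈ s}
  have hG : f ⁻¹' G = G := Set.ext fun x => frequently_iterate_apply_mem_iff
  have hG0 : μ G ≠ 0 := fun h => h0 <| by
    rw [← hf.toMeasurePreserving.conservative.measure_inter_frequently_image_mem_eq
      hs.nullMeasurableSet]
    exact measure_mono_null Set.inter_subset_right h
  exact ae_iff.2 <| (hf.measure_self_or_compl_eq_zero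
    (measurableSet_setOf_frequently_iterate_mem hf.measurable hs) hG).resolve_left hG0

lemma image_symmDiff_subset_compl {X : Type*} {f : X → X} {E F G : Set X}
    (hf : Surjective f) (hG : f ⁻¹' G = G) (h : ∀ x ∈ G, x ∈ E ↔ f x ∈ F) :
    (f '' E) ∆ F ⊆ Gᶜ := by
  rintro y (⟨⟨x, hxE, rfl⟩, hyF⟩ | ⟨hyF, hyE⟩) hyG
  · exact hyF ((h x (hG ▸ hyG)).1 hxE)
  · obtain ⟨x, rfl⟩ := hf y
    exact hyE ⟨x, (h x (hG ▸ hyG)).2 hyF, rfl⟩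

theorem Ergodic.exists_cyclic_partition {X : Type*} [MeasurableSpace X] {μ : Measure X}
    [IsFiniteMeasure μ] {S : X → X} {B : Set X} {d : ℕ} (hErg : Ergodic S μ)
    (hS : Surjective S) (hB : MeasurableSet B) (hB0 : μ B ≠ 0) (hd : 0 < d)
    (hret : ∀ x ∈ B, ∀ n, S^[n] x ∈ B → d ∣ n) :
    ∃ C : ℕ → Set X, (∀ i, MeasurableSet (C i)) ∧
      μ (Set.univ \ ⋃ i ∈ Finset.range d, C i) = 0 ∧
      (∀ i < d, ∀ j < d, i ≠ j → μ (C i ∩ C j) = 0) ∧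
      ∀ i < d, μ ((S '' C i) ∆ (C ((i + 1) % d))) = 0 := by
  set G := {x | ∃ᶠ n in atTop, S^[n] x ∈ B}
  have hGc : μ Gᶜ = 0 := ae_iff.1 (hErg.ae_frequently_iterate_mem hB hB0)
  have hG : S ⁻¹' G = G := Set.ext fun x => frequently_iterate_apply_mem_iff
  have hhit : ∀ x ∈ G, ∃ m, 1 ≤ m ∧ S^[m] x ∈ B := fun x hx =>
    (hx.and_eventually (eventually_ge_atTop 1)).exists.imp fun _ h => h.symm
  refine ⟨fun i => phaseSet S B d i ∪ Gᶜ, fun i =>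
    (measurableSet_phaseSet hErg.measurable hB d i).union
      (measurableSet_setOf_frequently_iterate_mem hErg.measurable hB).compl, ?_, ?_, ?_⟩
  · have hcover : ⋃ i ∈ Finset.range d, (phaseSet S B d i ∪ Gᶜ) = Set.univ := by
      refine Set.eq_univ_of_forall fun x => ?_
      by_cases hx : x ∈ G
      · obtain ⟨m, -, hm⟩ := hhit x hx
        obtain ⟨i, hi, hxi⟩ := exists_mem_phaseSet hd hm
        exact Set.mem_biUnion (Finset.mem_range.2 hi) (Or.inl hxi)
      · exact Set.mem_biUnion (Finset.mem_range.2 hd) (Or.inr hx)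
    rw [hcover, Set.sdiff_self, measure_empty]
  · intro i hi j hj hij
    refine measure_mono_null (fun x ⟨hxi, hxj⟩ => ?_) hGc
    rcases hxi with hxi | hxG
    · rcases hxj with hxj | hxG
      · exact absurd (eq_of_mem_phaseSet hret hi hj hxi hxj) hij
      · exact hxG
    · exact hxG
  · intro i _
    refine measure_mono_null (image_symmDiff_subset_compl hS hG fun x hx => ?_) hGc
    have hSx : S x ∈ G := by rwa [← Set.mem_preimage, hG]
    obtain ⟨m, hm1, hm⟩ := hhit x hx
    simp only [Set.mem_union, Set.mem_compl_iff, hx, hSx, not_true_eq_false, or_false,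
      phaseSet_mod]
    exact (apply_mem_phaseSet_succ_iff hret hm1 hm).symm

lemma exists_subset_ae_eq_forall_iterate_mem_dvd {X : Type*} [MeasurableSpace X]
    {μ : Measure X} {S : X → X} {B : Set X} {d : ℕ} (hS : Measurable S) (hB : MeasurableSet B)
    (hd : ∀ n, μ (B ∩ S^[n] ⁻¹' B) ≠ 0 → d ∣ n) :
    ∃ B' ⊆ B, MeasurableSet B' ∧ B' =ᵐ[μ] B ∧ ∀ x ∈ B', ∀ n, S^[n] x ∈ B' → d ∣ n := by
  refine ⟨B \ ⋃ n, ⋃ (_ : ¬ d ∣ n), S^[n] ⁻¹' B, Set.sdiff_subset,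
    hB.diff (.iUnion fun n => .iUnion fun _ => hS.iterate n hB), ?_, ?_⟩
  · rw [sdiff_ae_eq_self, Set.inter_iUnion₂]
    exact measure_iUnion_null fun n => measure_iUnion_null fun hn => not_not.1 (mt (hd n) hn)
  · rintro x ⟨-, hxbad⟩ n ⟨hn, -⟩
    by_contra hdn
    exact hxbad (Set.mem_iUnion₂.2 ⟨n, hdn, hn⟩)

lemma Nat.exists_gcd_of_set (R : Set ℕ) :
    ∃ d, (∀ n ∈ R, d ∣ n) ∧ ∀ c, (∀ n ∈ R, c ∣ n) → c ∣ d := by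
  let I := Ideal.span (((↑) : ℕ → ℤ) '' R)
  refine ⟨(Submodule.IsPrincipal.generator I).natAbs, fun n hn => ?_, fun c hc => ?_⟩
  · exact Int.natAbs_dvd_natAbs.2
      ((Submodule.IsPrincipal.mem_iff_generator_dvd I).1 (Ideal.subset_span ⟨n, hn, rfl⟩))
  · have hle : I ≤ Ideal.span {(c : ℤ)} := Ideal.span_le.2 <| by
      rintro _ ⟨n, hn, rfl⟩
      exact Ideal.mem_span_singleton.2 (Int.natCast_dvd_natCast.2 (hc n hn))
    exact Int.natCast_dvd.1 (Ideal.mem_span_singleton.1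
      (hle (Submodule.IsPrincipal.generator_mem I)))

section CyclicSet

variable {X : Type*} [MeasurableSpace X] {μ : Measure X} {S : X → X} {X₀ : Set X}

lemma exists_measure_inter_preimage_iterate_ne_zero (hS : Measure.QuasiMeasurePreserving S μ μ)
    (hinj : Injective S) {q : ℕ} {A : Set X}
    (hfull : μ (Set.univ \ ⋃ i ∈ Finset.range q, S^[i] '' X₀) = 0) (hA : μ A ≠ 0) :
    ∃ k < q, μ (A ∩ S^[k] ⁻¹' X₀) ≠ 0 := by
  have hcover : μ (⋃ k ∈ Finset.range q, S^[k] ⁻¹' X₀)ᶜ = 0 := by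
    refine measure_mono_null (fun x hx => ?_) ((hS.iterate (q - 1)).preimage_null hfull)
    simp only [Set.mem_compl_iff, Set.mem_iUnion, Finset.mem_range, Set.mem_preimage,
      not_exists] at hx
    simp only [Set.mem_preimage, Set.mem_sdiff, Set.mem_univ, true_and, Set.mem_iUnion,
      Finset.mem_range, not_exists]
    rintro i hi ⟨y, hy, hxy⟩
    rw [show q - 1 = i + (q - 1 - i) by omega, iterate_add_apply] at hxy
    exact hx (q - 1 - i) (by omega) ((hinj.iterate i hxy) ▸ hy)
  by_contra! h
  refine hA (measure_mono_null ?_ (measure_union_null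
    ((measure_biUnion_null_iff (Finset.countable_toSet _)).2 fun k hk =>
      h k (Finset.mem_range.1 hk)) hcover))
  rw [← Set.inter_iUnion₂]
  exact fun x hx => (em _).imp (fun h => ⟨hx, h⟩) id

lemma measure_inter_preimage_iterate_eq_zero_of_not_dvd (hS : Measure.QuasiMeasurePreserving S μ μ)
    (hinj : Injective S) {q : ℕ} (hq : 0 < q) (hcyc : μ ((S^[q] '' X₀) ∆ X₀) = 0)
    (hdisj : ∀ i, 0 < i → i < q → μ (S^[i] '' X₀ ∩ X₀) = 0) {n : ℕ} (hn : ¬ q ∣ n) :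
    μ (X₀ ∩ S^[n] ⁻¹' X₀) = 0 := by
  have hSq : S^[q] ⁻¹' X₀ =ᵐ[μ] X₀ := by
    have := (hS.iterate q).preimage_null hcyc
    rw [Set.preimage_symmDiff, Set.preimage_image_eq _ (hinj.iterate q)] at this
    exact (measure_symmDiff_eq_zero_iff.1 this).symm
  have hmul : S^[q * (n / q)] ⁻¹' X₀ =ᵐ[μ] X₀ := by
    rw [iterate_mul]
    exact (hS.iterate q).preimage_iterate_ae_eq _ hSq
  have hrem : μ (X₀ ∩ S^[n % q] ⁻¹' X₀) = 0 := by
    have hr : 0 < n % q := Nat.pos_of_ne_zero fun h => hn (Nat.dvd_of_mod_eq_zero h)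
    have := (hS.iterate (n % q)).preimage_null (hdisj _ hr (Nat.mod_lt n hq))
    rwa [Set.preimage_inter, Set.preimage_image_eq _ (hinj.iterate _)] at this
  rw [← Nat.div_add_mod n q, iterate_add, Set.preimage_comp,
    measure_congr (ae_eq_set_inter (ae_eq_refl X₀) ((hS.iterate _).preimage_ae_eq hmul))]
  exact hrem

lemma measure_inter_preimage_iterate_eq_zero_of_subset (hS : Measure.QuasiMeasurePreserving S μ μ)
    {B : Set X} {k n : ℕ} (hB : B ⊆ S^[k] ⁻¹' X₀) (hX₀ : μ (X₀ ∩ S^[n] ⁻¹' X₀) = 0) :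
    μ (B ∩ S^[n] ⁻¹' B) = 0 := by
  refine measure_mono_null ?_ ((hS.iterate k).preimage_null hX₀)
  rintro x ⟨hx, hxn⟩
  refine ⟨hB hx, ?_⟩
  rw [Set.mem_preimage, ← iterate_add_apply, add_comm, iterate_add_apply]
  exact hB hxn

end CyclicSet

theorem stmt2_general {X : Type*} [MeasurableSpace X] (S : X → X) (μ : Measure X)
    [IsProbabilityMeasure μ] (hS : Function.Bijective S) (hErg : Ergodic S μ)
    (q : ℕ) (X₀ : Set X) (hX₀ : MeasurableSet X₀)
    (hcyc : μ ((S^[q] '' X₀) ∆ X₀) = 0)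
    (hdisj : ∀ i < q, ∀ j < q, i ≠ j → μ (S^[i] '' X₀ ∩ S^[j] '' X₀) = 0)
    (hfull : μ (Set.univ \ ⋃ i ∈ Finset.range q, S^[i] '' X₀) = 0)
    (A : Set X) (hA : MeasurableSet A) (hpos : 0 < μ A) :
    ∃ B : Set X, B ⊆ A ∧ MeasurableSet B ∧ 0 < μ B ∧ ∃ d : ℕ, 1 ≤ d ∧
      (∀ n, 1 ≤ n → (∃ x ∈ B, S^[n] x ∈ B ∧ ∀ m, 1 ≤ m → m < n → S^[m] x ∉ B) → d ∣ n) ∧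
      (∀ c : ℕ, (∀ n, 1 ≤ n →
          (∃ x ∈ B, S^[n] x ∈ B ∧ ∀ m, 1 ≤ m → m < n → S^[m] x ∉ B) → c ∣ n) → c ∣ d) ∧
      q ∣ d ∧
      ∃ C : ℕ → Set X, (∀ i, MeasurableSet (C i)) ∧
        μ (Set.univ \ ⋃ i ∈ Finset.range d, C i) = 0 ∧
        (∀ i < d, ∀ j < d, i ≠ j → μ (C i ∩ C j) = 0) ∧
        ∀ i < d, μ ((S '' C i) ∆ (C ((i + 1) % d))) = 0 := by
  have hmp := hErg.toMeasurePreserving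
  have hqmp := hmp.quasiMeasurePreserving
  obtain ⟨k, hkq, hk⟩ :=
    exists_measure_inter_preimage_iterate_ne_zero hqmp hS.injective hfull hpos.ne'
  set B₁ := A ∩ S^[k] ⁻¹' X₀
  have hB₁ : MeasurableSet B₁ := hA.inter (hmp.measurable.iterate k hX₀)
  have hqR : ∀ n, μ (B₁ ∩ S^[n] ⁻¹' B₁) ≠ 0 → q ∣ n := fun n hn => by_contra fun hqn =>
    hn <| measure_inter_preimage_iterate_eq_zero_of_subset hqmp Set.inter_subset_right <|
      measure_inter_preimage_iterate_eq_zero_of_not_dvd hqmp hS.injective (by omega) hcyc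
        (fun i hi0 hiq => by simpa using hdisj i hiq 0 (by omega) hi0.ne') hqn
  obtain ⟨d, hdR, hRd⟩ := Nat.exists_gcd_of_set {n | μ (B₁ ∩ S^[n] ⁻¹' B₁) ≠ 0}
  obtain ⟨m, hm0, hm⟩ := hmp.conservative.exists_gt_measure_inter_ne_zero hB₁.nullMeasurableSet hk 0
  have hd : 0 < d := Nat.pos_of_ne_zero fun h => hm0.ne' (Nat.eq_zero_of_zero_dvd (h ▸ hdR m hm))
  obtain ⟨B, hBB₁, hB, hBae, hBret⟩ :=
    exists_subset_ae_eq_forall_iterate_mem_dvd (μ := μ) hmp.measurable hB₁ hdR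
  have hB0 : μ B ≠ 0 := (measure_congr hBae).trans_ne hk
  refine ⟨B, hBB₁.trans Set.inter_subset_left, hB, pos_iff_ne_zero.2 hB0, d, hd,
    fun n _ ⟨x, hx, hxn, _⟩ => hBret x hx n hxn, fun c hc => hRd c fun n hn => ?_, hRd q hqR,
    hErg.exists_cyclic_partition hS.surjective hB hB0 hd hBret⟩
  have hBn : μ (B ∩ S^[n] ⁻¹' B) ≠ 0 := (measure_congr
    (ae_eq_set_inter hBae ((hqmp.iterate n).preimage_ae_eq hBae))).trans_ne hn
  obtain ⟨x, hx, hxn⟩ := nonempty_of_measure_ne_zero hBn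
  exact dvd_of_dvd_firstReturn hc hx hxn

/-- In an ergodic invertible system with period `q`, every positive-measure set `A`
contains a positive-measure subset `B` whose gcd `d` of first-return times is a
multiple of `q` and is itself a period of the system. -/
theorem stmt2 {X : Type*} [MeasurableSpace X] (S : X → X) (μ : Measure X)
    [IsProbabilityMeasure μ] (hS : Function.Bijective S) (hErg : Ergodic S μ)
    (q : ℕ) (hq : 1 ≤ q) (X₀ : Set X) (hX₀ : MeasurableSet X₀)
    (hcyc : μ ((S^[q] '' X₀) ∆ X₀) = 0)
    (hdisj : ∀ i < q, ∀ j < q, i ≠ j → μ (S^[i] '' X₀ ∩ S^[j] '' X₀) = 0)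
    (hfull : μ (Set.univ \ ⋃ i ∈ Finset.range q, S^[i] '' X₀) = 0)
    (A : Set X) (hA : MeasurableSet A) (hpos : 0 < μ A) :
    ∃ B : Set X, B ⊆ A ∧ MeasurableSet B ∧ 0 < μ B ∧ ∃ d : ℕ, 1 ≤ d ∧
      (∀ n, 1 ≤ n → (∃ x ∈ B, S^[n] x ∈ B ∧ ∀ m, 1 ≤ m → m < n → S^[m] x ∉ B) → d ∣ n) ∧
      (∀ c : ℕ, (∀ n, 1 ≤ n →
          (∃ x ∈ B, S^[n] x ∈ B ∧ ∀ m, 1 ≤ m → m < n → S^[m] x ∉ B) → c ∣ n) → c ∣ d) ∧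
      q ∣ d ∧
      ∃ C : ℕ → Set X, (∀ i, MeasurableSet (C i)) ∧
        μ (Set.univ \ ⋃ i ∈ Finset.range d, C i) = 0 ∧
        (∀ i < d, ∀ j < d, i ≠ j → μ (C i ∩ C j) = 0) ∧
        ∀ i < d, μ ((S '' C i) ∆ (C ((i + 1) % d))) = 0 :=
  stmt2_general S μ hS hErg q X₀ hX₀ hcyc hdisj hfull A hA hpos
end

section
/- Let (X, T) be an aperiodic Borel dynamical system (Borel automorphism of a standard Borel space with no periodic points on the relevant set). For any Borel set A ⊆ X with first-return function τ_A(x) = inf{n ≥ 1 : Tⁿx ∈ A} and any n ≥ 1, the set B := {x ∈ X : τ_A(x) ∈ nℕ⁺} satisfies: B, TB, …, T^{n−1}B are pairwise disjoint, and for every ergodic T-invariant probability measure μ, μ(O(A) \ ⋃_{j=0}^{n−1} TʲB) ≤ n / min_{x∈A} τ_A(x), where O(A) = ⋃_{p∈ℤ} T^p A. -/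
/-!
A point `x` whose forward orbit meets `A` has a first hitting time `m`; stepping back `j < n`
times with `n ∣ m + j` lands in `B`, unless one of those backward steps already lies in `A`.
Hence, up to the points of the orbit that never visit `A` later (a null set by ergodicity),
the complement of the tower `⋃_{j<n} TʲB` in the orbit of `A` lies in `⋃_{j<n} TʲA`, of
measure at most `n μ(A)`. Since `A, T⁻¹A, …, T^{-(N-1)}A` are pairwise disjoint,
`μ(A) ≤ 1 / N`. Disjointness of the floors holds because two points of `B` on the same orbit
at distance `d < n` would have first hitting times differing by `d`, both multiples of `n`.
-/

open MeasureTheory Set Function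

section Hitting

variable {α : Type*} {f : α → α} {A : Set α} {x : α} {m : ℕ}

def IsFirstHittingTime (f : α → α) (A : Set α) (x : α) (m : ℕ) : Prop :=
  1 ≤ m ∧ f^[m] x ∈ A ∧ ∀ j, 1 ≤ j → j < m → f^[j] x ∉ A

def hittingSet (f : α → α) (A : Set α) : Set α :=
  {x | ∃ m, 1 ≤ m ∧ f^[m] x ∈ A}

def rokhlinBase (f : α → α) (A : Set α) (n : ℕ) : Set α :=
  {x | ∃ m, n ∣ m ∧ IsFirstHittingTime f A x m}

theorem IsFirstHittingTime.unique {m' : ℕ} (h : IsFirstHittingTime f A x m)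
    (h' : IsFirstHittingTime f A x m') : m = m' := by
  by_contra hne
  rcases Nat.lt_or_gt_of_ne hne with hlt | hlt
  · exact h'.2.2 m h.1 hlt h.2.1
  · exact h.2.2 m' h'.1 hlt h'.2.1

theorem IsFirstHittingTime.iterate {d : ℕ} (h : IsFirstHittingTime f A x m) (hd : d < m) :
    IsFirstHittingTime f A (f^[d] x) (m - d) := by
  refine ⟨by omega, ?_, fun j hj hjm => ?_⟩
  · rw [← iterate_add_apply, Nat.sub_add_cancel hd.le]
    exact h.2.1
  · rw [← iterate_add_apply]
    exact h.2.2 (j + d) (by omega) (by omega)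

theorem IsFirstHittingTime.of_iterate {d : ℕ} (h : IsFirstHittingTime f A (f^[d] x) m)
    (hd : ∀ k, 1 ≤ k → k ≤ d → f^[k] x ∉ A) : IsFirstHittingTime f A x (m + d) := by
  refine ⟨by have := h.1; omega, by rw [iterate_add_apply]; exact h.2.1, fun k hk hkm => ?_⟩
  rcases le_or_gt k d with hkd | hdk
  · exact hd k hk hkd
  · have hsplit : f^[k] x = f^[k - d] (f^[d] x) := by
      rw [← iterate_add_apply, Nat.sub_add_cancel hdk.le]
    rw [hsplit]
    exact h.2.2 (k - d) (by omega) (by omega)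

theorem exists_isFirstHittingTime (hx : x ∈ hittingSet f A) :
    ∃ m, IsFirstHittingTime f A x m := by
  classical
  refine ⟨Nat.find hx, (Nat.find_spec hx).1, (Nat.find_spec hx).2, fun j hj hjm hjA => ?_⟩
  exact Nat.find_min hx hjm ⟨hj, hjA⟩

theorem disjoint_image_iterate_rokhlinBase (hf : Injective f) {n i j : ℕ} (hi : i < n)
    (hj : j < n) (hij : i ≠ j) :
    Disjoint (f^[i] '' rokhlinBase f A n) (f^[j] '' rokhlinBase f A n) := by
  wlog hlt : i < j generalizing i j
  · exact (this hj hi hij.symm (by omega)).symm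
  rw [Set.disjoint_left]
  rintro z ⟨x, ⟨m, hmn, hm⟩, rfl⟩ ⟨y, ⟨m', hm'n, hm'⟩, hyx⟩
  have hxy : x = f^[j - i] y := by
    refine hf.iterate i ?_
    rw [← iterate_add_apply, Nat.add_sub_cancel' hlt.le, hyx]
  have hnm' : n ≤ m' := Nat.le_of_dvd hm'.1 hm'n
  have hm_eq : m = m' - (j - i) := by
    subst hxy
    exact hm.unique (hm'.iterate (by omega))
  have hdvd : n ∣ j - i := by
    have := Nat.dvd_sub hm'n hmn
    rwa [hm_eq, Nat.sub_sub_self (by omega)] at this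
  exact absurd (Nat.le_of_dvd (by omega) hdvd) (by omega)

theorem exists_lt_dvd_add (m : ℕ) {n : ℕ} (hn : 0 < n) : ∃ j < n, n ∣ m + j := by
  refine ⟨n - 1 - (m + n - 1) % n, by omega, ⟨(m + n - 1) / n, ?_⟩⟩
  have := Nat.mod_lt (m + n - 1) hn
  have := Nat.div_add_mod (m + n - 1) n
  omega

theorem hittingSet_diff_subset_iUnion_image_iterate (hf : Surjective f) {n : ℕ} (hn : 1 ≤ n) :
    hittingSet f A \ ⋃ j ∈ Finset.range n, f^[j] '' rokhlinBase f A n ⊆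
      ⋃ j ∈ Finset.range n, f^[j] '' A := by
  rintro x ⟨hx, hxB⟩
  by_contra hxA
  simp only [mem_iUnion, Finset.mem_range, not_exists] at hxA hxB
  obtain ⟨m, hm⟩ := exists_isFirstHittingTime hx
  obtain ⟨j, hjn, hdvd⟩ := exists_lt_dvd_add m hn
  obtain ⟨y, rfl⟩ := (hf.iterate j) x
  have hy : IsFirstHittingTime f A y (m + j) := by
    refine hm.of_iterate fun k _ hkj hkA => hxA (j - k) (by omega) ⟨f^[k] y, hkA, ?_⟩
    rw [← iterate_add_apply, Nat.sub_add_cancel hkj]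
  exact hxB j hjn ⟨y, ⟨m + j, hdvd, hy⟩, rfl⟩

end Hitting

section Measure

variable {α : Type*} [MeasurableSpace α] {μ : Measure α} {A : Set α}

theorem measurableSet_hittingSet {f : α → α} (hf : Measurable f) (hA : MeasurableSet A) :
    MeasurableSet (hittingSet f A) := by
  have : hittingSet f A = ⋃ m, ⋃ (_ : 1 ≤ m), f^[m] ⁻¹' A := by
    ext x
    simp [hittingSet]
  rw [this]
  exact .iUnion fun m => .iUnion fun _ => (hf.iterate m) hA

theorem measure_le_inv_of_forall_iterate_notMem [IsProbabilityMeasure μ] {f : α → α}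
    (hf : MeasurePreserving f μ μ) (hA : MeasurableSet A) {N : ℕ}
    (hmin : ∀ x ∈ A, ∀ m, 1 ≤ m → m < N → f^[m] x ∉ A) : μ A ≤ (N : ENNReal)⁻¹ := by
  have hdisj : ∀ i j, i < j → j < N → Disjoint (f^[i] ⁻¹' A) (f^[j] ⁻¹' A) := by
    refine fun i j hij hj => Set.disjoint_left.mpr fun x hxi hxj => ?_
    refine hmin _ hxi (j - i) (by omega) (by omega) ?_
    rwa [← iterate_add_apply, Nat.sub_add_cancel hij.le]
  have hsum : (N : ENNReal) * μ A ≤ 1 :=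
    calc (N : ENNReal) * μ A = ∑ i ∈ Finset.range N, μ (f^[i] ⁻¹' A) := by
          simp [(hf.iterate _).measure_preimage hA.nullMeasurableSet]
      _ = μ (⋃ i ∈ Finset.range N, f^[i] ⁻¹' A) := by
          refine (measure_biUnion_finset (fun i hi j hj hij => ?_)
            fun i _ => (hf.measurable.iterate i) hA).symm
          simp only [Finset.coe_range, mem_Iio] at hi hj
          rcases Nat.lt_or_gt_of_ne hij with h | h
          · exact hdisj i j h hj
          · exact (hdisj j i h hi).symm
      _ ≤ 1 := prob_le_one
  exact ENNReal.le_inv_iff_mul_le.mpr (by rwa [mul_comm])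

theorem measure_image_zpow {T : Equiv.Perm α} (hT : MeasurePreserving T μ μ)
    (hT' : MeasurePreserving T.symm μ μ) (hA : MeasurableSet A) (p : ℤ) :
    μ (⇑(T ^ p) '' A) = μ A := by
  have key : ∀ q : ℤ, MeasurePreserving ⇑(T ^ q) μ μ := by
    intro q
    induction q using Int.induction_on with
    | zero => exact MeasurePreserving.id μ
    | succ k ih => rw [zpow_add_one, Equiv.Perm.coe_mul]; exact ih.comp hT
    | pred k ih => rw [zpow_sub_one, Equiv.Perm.coe_mul, Equiv.Perm.coe_inv]; exact ih.comp hT'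
  rw [Equiv.image_eq_preimage_symm, ← Equiv.Perm.coe_inv, ← zpow_neg]
  exact (key (-p)).measure_preimage hA.nullMeasurableSet

theorem Ergodic.measure_orbit_diff_hittingSet_eq_zero [IsFiniteMeasure μ] {T : Equiv.Perm α}
    (hT : Ergodic T μ) (hT' : MeasurePreserving T.symm μ μ) (hA : MeasurableSet A) :
    μ ((⋃ p : ℤ, ⇑(T ^ p) '' A) \ hittingSet T A) = 0 := by
  have hH := measurableSet_hittingSet hT.measurable hA
  have hinv : T ⁻¹' hittingSet T A ⊆ hittingSet T A := by
    rintro x ⟨m, -, hm⟩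
    exact ⟨m + 1, by omega, by rwa [iterate_succ_apply]⟩
  rcases hT.ae_empty_or_univ_of_preimage_ae_le' hH.nullMeasurableSet hinv.eventuallyLE
    (measure_ne_top μ _) with h | h
  · have hA0 : μ A = 0 := by
      rw [← hT.toMeasurePreserving.measure_preimage hA.nullMeasurableSet]
      exact measure_mono_null (fun x hx => (⟨1, le_rfl, hx⟩ : x ∈ hittingSet T A))
        (ae_eq_empty.mp h)
    refine measure_mono_null sdiff_subset (measure_iUnion_null fun p => ?_)
    rw [measure_image_zpow hT.toMeasurePreserving hT' hA, hA0]
  · exact measure_mono_null (fun x hx => hx.2) (ae_eq_univ.mp h)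

end Measure

theorem stmt5_general {X : Type*} [MeasurableSpace X]
    (T : Equiv.Perm X) (hT' : Measurable T.symm)
    (A : Set X) (hA : MeasurableSet A) (n N : ℕ) (hn : 1 ≤ n)
    (hmin : ∀ x ∈ A, ∀ m, 1 ≤ m → m < N → (⇑T)^[m] x ∉ A)
    (B : Set X)
    (hB : B = {x | ∃ m, 1 ≤ m ∧ n ∣ m ∧ (⇑T)^[m] x ∈ A ∧
      ∀ j, 1 ≤ j → j < m → (⇑T)^[j] x ∉ A}) :
    (∀ i < n, ∀ j < n, i ≠ j → ((⇑T)^[i] '' B) ∩ ((⇑T)^[j] '' B) = ∅) ∧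
    ∀ μ : Measure X, IsProbabilityMeasure μ → Ergodic T μ →
      μ ((⋃ p : ℤ, ⇑(T ^ p) '' A) \ ⋃ j ∈ Finset.range n, (⇑T)^[j] '' B)
        ≤ (n : ENNReal) / (N : ENNReal) := by
  obtain rfl : B = rokhlinBase T A n := hB.trans <| Set.ext fun x => exists_congr fun m =>
    ⟨fun ⟨h1, hd, h⟩ => ⟨hd, h1, h⟩, fun ⟨hd, h1, h⟩ => ⟨h1, hd, h⟩⟩
  refine ⟨fun i hi j hj hij => Set.disjoint_iff_inter_eq_empty.mp
    (disjoint_image_iterate_rokhlinBase T.injective hi hj hij), fun μ _ hμ => ?_⟩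
  have hTμ : MeasurePreserving T μ μ := hμ.toMeasurePreserving
  have hTμ' : MeasurePreserving T.symm μ μ :=
    MeasurePreserving.symm ⟨T, hTμ.measurable, hT'⟩ hTμ
  have himage : ∀ j : ℕ, μ ((⇑T)^[j] '' A) = μ A := fun j => by
    rw [Equiv.Perm.iterate_eq_pow, ← zpow_natCast]
    exact measure_image_zpow hTμ hTμ' hA j
  calc μ ((⋃ p : ℤ, ⇑(T ^ p) '' A) \ ⋃ j ∈ Finset.range n, (⇑T)^[j] '' rokhlinBase T A n)
      ≤ μ ((⋃ p : ℤ, ⇑(T ^ p) '' A) \ hittingSet T A ∪ ⋃ j ∈ Finset.range n, (⇑T)^[j] '' A) :=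
        measure_mono <| (sdiff_triangle _ _ _).trans <|
          sup_le_sup_left (hittingSet_diff_subset_iUnion_image_iterate T.surjective hn) _
    _ ≤ 0 + ∑ j ∈ Finset.range n, μ ((⇑T)^[j] '' A) :=
        (measure_union_le _ _).trans <| add_le_add
          (hμ.measure_orbit_diff_hittingSet_eq_zero hTμ' hA).le (measure_biUnion_finset_le _ _)
    _ = n * μ A := by simp [himage]
    _ ≤ n * (N : ENNReal)⁻¹ := by
        gcongr
        exact measure_le_inv_of_forall_iterate_notMem hTμ hA hmin
    _ = n / N := (div_eq_mul_inv _ _).symm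

/-- Key claim of the Borel Rokhlin tower construction (Glasner–Weiss): for an
aperiodic Borel automorphism `T`, a Borel set `A` whose first-return times are all
`≥ N`, and `B := {x : τ_A(x) ∈ nℕ⁺}`, the sets `B, TB, …, T^{n−1}B` are pairwise
disjoint and every ergodic invariant probability measure gives
`O(A) \ ⋃_{j<n} TʲB` measure at most `n / N`. -/
theorem stmt5 {X : Type*} [MeasurableSpace X] [StandardBorelSpace X]
    (T : Equiv.Perm X) (hT : Measurable T) (hT' : Measurable T.symm)
    (haper : ∀ x : X, ∀ m, 1 ≤ m → (⇑T)^[m] x ≠ x)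
    (A : Set X) (hA : MeasurableSet A) (n N : ℕ) (hn : 1 ≤ n) (hN : 1 ≤ N)
    (hmin : ∀ x ∈ A, ∀ m, 1 ≤ m → m < N → (⇑T)^[m] x ∉ A)
    (B : Set X)
    (hB : B = {x | ∃ m, 1 ≤ m ∧ n ∣ m ∧ (⇑T)^[m] x ∈ A ∧
      ∀ j, 1 ≤ j → j < m → (⇑T)^[j] x ∉ A}) :
    (∀ i < n, ∀ j < n, i ≠ j → ((⇑T)^[i] '' B) ∩ ((⇑T)^[j] '' B) = ∅) ∧
    ∀ μ : Measure X, IsProbabilityMeasure μ → Ergodic T μ →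
      μ ((⋃ p : ℤ, ⇑(T ^ p) '' A) \ ⋃ j ∈ Finset.range n, (⇑T)^[j] '' B)
        ≤ (n : ENNReal) / (N : ENNReal) :=
  stmt5_general T hT' A hA n N hn hmin B hB
end

section
/- Let (X, T) be an aperiodic Borel dynamical system on a standard Borel space. For every n ≥ 1 and δ > 0 there exists a Borel set B ⊆ X such that B, TB, …, T^{n−1}B are pairwise disjoint and μ(⋃_{k=0}^{n−1} TᵏB) > 1 − δ for every aperiodic ergodic T-invariant probability measure μ. -/
/-!
Transport `X` into `ℝ` by a Borel injection `e`. For a rational interval `V`, the points of `V`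
whose next `N - 1` iterates leave `V` form a set in which no two points of an orbit are closer
than `N`; every aperiodic point lies in one of these countably many sets `C j`. Keeping, on each
orbit, only the points of the `C j` with least index meeting that orbit gives a Borel marker set
`A` that meets every aperiodic orbit, with gaps `≥ N`. Its translates `T⁻ᵏ A`, `k < N`, are
disjoint, so `μ A ≤ 1 / N`, and by ergodicity almost every point has visited `A` in the past.
The base `B` consists of the points whose last visit to `A` was a multiple of `n` steps ago and
which do not return to `A` within the next `n - 1` steps; its first `n` images are disjoint and
cover everything except `⋃ k < n, T⁻ᵏ A`, of measure `≤ n / N`.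
-/

open MeasureTheory Set Equiv
open scoped ENNReal

namespace BorelRokhlin

variable {X : Type*} (T : Perm X)

lemma zpow_apply_zpow_apply (a b : ℤ) (x : X) : (T ^ a) ((T ^ b) x) = (T ^ (a + b)) x := by
  rw [zpow_add, Perm.mul_apply]

lemma iterate_eq_zpow (k : ℕ) : (⇑T)^[k] = ⇑(T ^ (k : ℤ)) := by
  rw [zpow_natCast, Perm.iterate_eq_pow]

def OrbitSeparated (N : ℕ) (A : Set X) : Prop :=
  ∀ x ∈ A, ∀ m : ℕ, 0 < m → m < N → (T ^ (m : ℤ)) x ∉ A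

def avoidingPart (N : ℕ) (V : Set X) : Set X :=
  V ∩ ⋂ k ∈ Finset.Ico 1 N, (T ^ (k : ℤ)) ⁻¹' Vᶜ

def leastIndexPart (C : ℕ → Set X) : Set X :=
  ⋃ j, C j ∩ ⋂ (k : ℤ) (i < j), (T ^ k) ⁻¹' (C i)ᶜ

def IsBackwardHittingTime (A : Set X) (x : X) (f : ℕ) : Prop :=
  (T ^ (-f : ℤ)) x ∈ A ∧ ∀ j < f, (T ^ (-j : ℤ)) x ∉ A

def towerBase (A : Set X) (n : ℕ) : Set X :=
  {x | (∃ q, IsBackwardHittingTime T A x (q * n)) ∧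
    ∀ k : ℕ, 0 < k → k < n → (T ^ (k : ℤ)) x ∉ A}

section Markers

variable {T} {N : ℕ}

lemma orbitSeparated_avoidingPart (V : Set X) : OrbitSeparated T N (avoidingPart T N V) := by
  intro x hx m hm hmN hmx
  exact mem_iInter₂.1 hx.2 m (Finset.mem_Ico.2 ⟨hm, hmN⟩) hmx.1

lemma orbitSeparated_leastIndexPart {C : ℕ → Set X} (hC : ∀ j, OrbitSeparated T N (C j)) :
    OrbitSeparated T N (leastIndexPart T C) := by
  intro x hx m hm hmN hy
  simp only [leastIndexPart, mem_iUnion, mem_inter_iff, mem_iInter, mem_preimage,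
    mem_compl_iff] at hx hy
  obtain ⟨j, hxj, hxmin⟩ := hx
  obtain ⟨j', hyj, hymin⟩ := hy
  have hle : j ≤ j' := not_lt.1 fun h => hxmin m j' h hyj
  have hge : j' ≤ j := not_lt.1 fun h => hymin (-m) j h (by
    rwa [zpow_apply_zpow_apply, neg_add_cancel, zpow_zero, Perm.one_apply])
  obtain rfl := le_antisymm hle hge
  exact hC j x hxj m hm hmN hyj

lemma exists_zpow_apply_mem_leastIndexPart {C : ℕ → Set X} {x : X} {j : ℕ} (hx : x ∈ C j) :
    ∃ k : ℤ, (T ^ k) x ∈ leastIndexPart T C := by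
  classical
  have hmeets : ∃ j, ∃ k : ℤ, (T ^ k) x ∈ C j := ⟨j, 0, hx⟩
  obtain ⟨k, hk⟩ := Nat.find_spec hmeets
  refine ⟨k, mem_iUnion.2 ⟨Nat.find hmeets, hk,
    mem_iInter₂.2 fun l i => mem_iInter.2 fun hi => ?_⟩⟩
  rw [mem_preimage, zpow_apply_zpow_apply]
  exact fun h => Nat.find_min hmeets hi ⟨_, h⟩

lemma exists_rat_mem_avoidingPart {e : X → ℝ} (he : Function.Injective e) {x : X}
    (hx : ∀ m : ℕ, 0 < m → m < N → (T ^ (m : ℤ)) x ≠ x) :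
    ∃ p q : ℚ, x ∈ avoidingPart T N (e ⁻¹' Ioo (p : ℝ) q) := by
  set F := (Finset.Ico 1 N).image fun k : ℕ => e ((T ^ (k : ℤ)) x)
  have hxF : e x ∈ (F : Set ℝ)ᶜ := by
    simp only [F, Finset.coe_image, mem_compl_iff, mem_image, Finset.mem_coe, Finset.mem_Ico,
      not_exists, not_and]
    exact fun k hk h => hx k hk.1 hk.2 (he h)
  obtain ⟨v, hv, hxv, hvF⟩ := Real.isTopologicalBasis_Ioo_rat.exists_subset_of_mem_open hxF
    F.finite_toSet.isClosed.isOpen_compl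
  obtain ⟨p, q, -, rfl⟩ : ∃ p q : ℚ, p < q ∧ v = Ioo (p : ℝ) q := by simpa using hv
  refine ⟨p, q, hxv, mem_iInter₂.2 fun k hk => fun hkV => hvF hkV ?_⟩
  exact Finset.mem_coe.2 (Finset.mem_image_of_mem _ hk)

end Markers

section Tower

variable {T} {A : Set X}

lemma IsBackwardHittingTime.unique {x : X} {f g : ℕ} (hf : IsBackwardHittingTime T A x f)
    (hg : IsBackwardHittingTime T A x g) : f = g :=
  le_antisymm (not_lt.1 fun h => hf.2 g h hg.1) (not_lt.1 fun h => hg.2 f h hf.1)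

lemma exists_isBackwardHittingTime {x : X} (h : ∃ j : ℕ, (T ^ (-j : ℤ)) x ∈ A) :
    ∃ f, IsBackwardHittingTime T A x f := by
  classical
  exact ⟨Nat.find h, Nat.find_spec h, fun j hj => Nat.find_min h hj⟩

lemma IsBackwardHittingTime.zpow_apply {x : X} {f m : ℕ} (hf : IsBackwardHittingTime T A x f)
    (hx : ∀ k : ℕ, 0 < k → k ≤ m → (T ^ (k : ℤ)) x ∉ A) :
    IsBackwardHittingTime T A ((T ^ (m : ℤ)) x) (m + f) := by
  refine ⟨?_, fun j hj => ?_⟩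
  · rw [zpow_apply_zpow_apply, show -((m + f : ℕ) : ℤ) + m = -f by omega]
    exact hf.1
  · rw [zpow_apply_zpow_apply]
    rcases lt_or_ge j m with hjm | hjm
    · rw [show -(j : ℤ) + m = (m - j : ℕ) by omega]
      exact hx (m - j) (by omega) (by omega)
    · rw [show -(j : ℤ) + m = -(j - m : ℕ) by omega]
      exact hf.2 (j - m) (by omega)

lemma IsBackwardHittingTime.zpow_neg_apply {x : X} {f i : ℕ} (hf : IsBackwardHittingTime T A x f)
    (hi : i ≤ f) : IsBackwardHittingTime T A ((T ^ (-i : ℤ)) x) (f - i) := by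
  refine ⟨?_, fun j hj => ?_⟩
  · rw [zpow_apply_zpow_apply, show -((f - i : ℕ) : ℤ) + -i = -f by omega]
    exact hf.1
  · rw [zpow_apply_zpow_apply, show -(j : ℤ) + -i = -(j + i : ℕ) by omega]
    exact hf.2 (j + i) (by omega)

lemma disjoint_image_towerBase {i j n : ℕ} (hij : i < j) (hjn : j < n) :
    Disjoint ((T ^ (i : ℤ)) '' towerBase T A n) ((T ^ (j : ℤ)) '' towerBase T A n) := by
  rw [Set.disjoint_left]
  rintro _ ⟨x, ⟨⟨q, hq⟩, -⟩, rfl⟩ ⟨y, ⟨⟨r, hr⟩, hy⟩, hxy⟩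
  have hx : x = (T ^ ((j - i : ℕ) : ℤ)) y := by
    have := congrArg (T ^ (-i : ℤ)) hxy
    rw [zpow_apply_zpow_apply, zpow_apply_zpow_apply, neg_add_cancel, zpow_zero,
      Perm.one_apply] at this
    rw [← this, show -(i : ℤ) + j = (j - i : ℕ) by omega]
  have hqr := (hr.zpow_apply fun k hk hkm => hy k hk (by omega)).unique (hx ▸ hq)
  have := congrArg (· % n) hqr
  simp only [Nat.add_mul_mod_self_right, Nat.mul_mod_left,
    Nat.mod_eq_of_lt (by omega : j - i < n)] at this
  omega

lemma backwardOrbit_subset_tower {n : ℕ} (hn : 0 < n) :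
    {y | ∃ j : ℕ, (T ^ (-j : ℤ)) y ∈ A} ⊆
      (⋃ i ∈ Finset.range n, (T ^ (i : ℤ)) '' towerBase T A n) ∪
        ⋃ k ∈ Finset.range n, (T ^ (k : ℤ)) ⁻¹' A := by
  intro y hy
  obtain ⟨f, hf⟩ := exists_isBackwardHittingTime hy
  set i := f % n
  have hxy : (T ^ (i : ℤ)) ((T ^ (-i : ℤ)) y) = y := by
    rw [zpow_apply_zpow_apply, add_neg_cancel, zpow_zero, Perm.one_apply]
  by_cases hx : ∀ k : ℕ, 0 < k → k < n → (T ^ (k : ℤ)) ((T ^ (-i : ℤ)) y) ∉ A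
  · have hfx : IsBackwardHittingTime T A ((T ^ (-i : ℤ)) y) (f / n * n) := by
      rw [show f / n * n = f - i from (Nat.sub_eq_of_eq_add (Nat.div_add_mod' f n).symm).symm]
      exact hf.zpow_neg_apply (Nat.mod_le f n)
    exact Or.inl (mem_biUnion (Finset.mem_range.2 (Nat.mod_lt f hn)) ⟨_, ⟨⟨_, hfx⟩, hx⟩, hxy⟩)
  · push Not at hx
    obtain ⟨k, hk, hkn, hkA⟩ := hx
    rw [zpow_apply_zpow_apply] at hkA
    rcases le_or_gt k i with hki | hik
    · rw [show (k : ℤ) + -i = -(i - k : ℕ) by omega] at hkA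
      exact absurd hkA (hf.2 (i - k) (by have := Nat.mod_le f n; omega))
    · rw [show (k : ℤ) + -i = (k - i : ℕ) by omega] at hkA
      exact Or.inr (mem_biUnion (Finset.mem_range.2 (by omega)) hkA)

end Tower

section Measurability

variable [MeasurableSpace X] {T}

lemma measurable_zpow (hT : Measurable T) (hT' : Measurable T.symm) (k : ℤ) :
    Measurable ⇑(T ^ k) := by
  cases k with
  | ofNat m => exact hT.iterate m
  | negSucc m =>
    rw [zpow_negSucc, ← inv_pow, Perm.coe_pow]
    exact hT'.iterate (m + 1)

variable (hT : Measurable T) (hT' : Measurable T.symm)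
include hT hT'

lemma measurableSet_avoidingPart (N : ℕ) {V : Set X} (hV : MeasurableSet V) :
    MeasurableSet (avoidingPart T N V) :=
  hV.inter (.biInter (to_countable _) fun k _ => measurable_zpow hT hT' k hV.compl)

lemma measurableSet_leastIndexPart {C : ℕ → Set X} (hC : ∀ j, MeasurableSet (C j)) :
    MeasurableSet (leastIndexPart T C) :=
  .iUnion fun j => (hC j).inter <| .iInter fun k => .iInter fun i => .iInter fun _ =>
    measurable_zpow hT hT' k (hC i).compl

lemma measurableSet_towerBase {A : Set X} (hA : MeasurableSet A) (n : ℕ) :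
    MeasurableSet (towerBase T A n) := by
  have hpre (k : ℤ) : MeasurableSet ((T ^ k) ⁻¹' A) := measurable_zpow hT hT' k hA
  simp only [towerBase, IsBackwardHittingTime, ofPred_and, ofPred_exists, ofPred_forall]
  exact (MeasurableSet.iUnion fun q => (hpre _).inter <|
      .iInter fun j => .iInter fun _ => (hpre _).compl).inter
    (.iInter fun k => .iInter fun _ => .iInter fun _ => (hpre _).compl)

lemma exists_marker {e : X → ℝ} (he : Measurable e) (he' : Function.Injective e) (N : ℕ) :
    ∃ A, MeasurableSet A ∧ OrbitSeparated T N A ∧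
      ∀ x, (∀ m : ℕ, 0 < m → (T ^ (m : ℤ)) x ≠ x) → ∃ k : ℤ, (T ^ k) x ∈ A := by
  obtain ⟨g, hg⟩ := exists_surjective_nat (ℚ × ℚ)
  set C : ℕ → Set X := fun j => avoidingPart T N (e ⁻¹' Ioo ((g j).1 : ℝ) (g j).2)
  refine ⟨leastIndexPart T C,
    measurableSet_leastIndexPart hT hT' fun j => measurableSet_avoidingPart hT hT' N
      (he measurableSet_Ioo),
    orbitSeparated_leastIndexPart fun j => orbitSeparated_avoidingPart _, fun x hx => ?_⟩
  obtain ⟨p, q, hpq⟩ := exists_rat_mem_avoidingPart he' fun m hm _ => hx m hm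
  obtain ⟨j, hj⟩ := hg (p, q)
  exact exists_zpow_apply_mem_leastIndexPart (C := C) (j := j) (by simpa only [C, hj] using hpq)

end Measurability

section Measure

variable [MeasurableSpace X] {T} {μ : Measure X}

lemma measurePreserving_zpow (hT : MeasurePreserving T μ μ) (hT' : Measurable T.symm) (k : ℤ) :
    MeasurePreserving ⇑(T ^ k) μ μ := by
  cases k with
  | ofNat m => exact hT.iterate m
  | negSucc m =>
    rw [zpow_negSucc, ← inv_pow, Perm.coe_pow]
    exact (hT.symm ⟨T, hT.measurable, hT'⟩).iterate (m + 1)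

variable (hμ : ∀ k : ℤ, MeasurePreserving ⇑(T ^ k) μ μ)
include hμ

lemma measure_zpow_preimage {A : Set X} (hAm : MeasurableSet A) (k : ℤ) :
    μ ((T ^ k) ⁻¹' A) = μ A :=
  (hμ k).measure_preimage hAm.nullMeasurableSet

lemma OrbitSeparated.natCast_mul_measure_le {N : ℕ} {A : Set X} (hA : OrbitSeparated T N A)
    (hAm : MeasurableSet A) : (N : ℝ≥0∞) * μ A ≤ μ univ := by
  have hdisj : (Finset.range N : Set ℕ).PairwiseDisjoint fun k => (T ^ (k : ℤ)) ⁻¹' A := by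
    intro k hk l hl hkl
    wlog hlt : k < l generalizing k l
    · exact (this hl hk hkl.symm (hkl.lt_or_gt.resolve_left hlt)).symm
    refine Set.disjoint_left.2 fun x hxk hxl => hA _ hxk (l - k) (by omega) ?_ ?_
    · simp only [Finset.coe_range, mem_Iio] at hl; omega
    · rwa [zpow_apply_zpow_apply, show ((l - k : ℕ) : ℤ) + k = l by omega]
  calc (N : ℝ≥0∞) * μ A = ∑ k ∈ Finset.range N, μ ((T ^ (k : ℤ)) ⁻¹' A) := by
        simp only [measure_zpow_preimage hμ hAm, Finset.sum_const, Finset.card_range, nsmul_eq_mul]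
    _ = μ (⋃ k ∈ Finset.range N, (T ^ (k : ℤ)) ⁻¹' A) :=
        (measure_biUnion_finset hdisj fun k _ => (hμ k).measurable hAm).symm
    _ ≤ μ univ := measure_mono (subset_univ _)

lemma measure_ne_zero_of_ae_exists_zpow_mem [NeZero μ] {A : Set X}
    (h : ∀ᵐ x ∂μ, ∃ k : ℤ, (T ^ k) x ∈ A) : μ A ≠ 0 := by
  intro hA
  have hnull : ∀ᵐ x ∂μ, x ∉ ⋃ k : ℤ, (T ^ k) ⁻¹' A :=
    measure_eq_zero_iff_ae_notMem.1 <| measure_iUnion_null fun k => by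
      rwa [(hμ k).measure_preimage (.of_null hA)]
  have : ∀ᵐ _ ∂μ, False := (h.and hnull).mono fun _ ⟨⟨k, hk⟩, hx⟩ => hx (mem_iUnion.2 ⟨k, hk⟩)
  exact NeZero.ne μ (ae_eq_bot.1 (Filter.eventually_false_iff_eq_bot.1 this))

lemma Ergodic.ae_exists_zpow_neg_mem [IsFiniteMeasure μ] (hE : Ergodic T μ) {A : Set X}
    (hAm : MeasurableSet A) (hA : μ A ≠ 0) : ∀ᵐ x ∂μ, ∃ j : ℕ, (T ^ (-j : ℤ)) x ∈ A := by
  set G := ⋃ j : ℕ, (T ^ (-j : ℤ)) ⁻¹' A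
  have hGm : MeasurableSet G := .iUnion fun j => (hμ _).measurable hAm
  have hGT : G ⊆ T ⁻¹' G := fun x hx => by
    obtain ⟨j, hj⟩ := mem_iUnion.1 hx
    refine mem_iUnion.2 ⟨j + 1, ?_⟩
    have hTx : T x = (T ^ (1 : ℤ)) x := by rw [zpow_one]
    rw [mem_preimage, hTx, zpow_apply_zpow_apply, show -((j + 1 : ℕ) : ℤ) + 1 = -j by omega]
    exact hj
  rcases hE.ae_empty_or_univ_of_ae_le_preimage hGm.nullMeasurableSet hGT.eventuallyLE with h | h
  · refine absurd (measure_mono_null (subset_iUnion_of_subset 0 ?_)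
      ((measure_congr h).trans measure_empty)) hA
    simp
  · exact h.mem_iff.mono fun x hx => mem_iUnion.1 (hx.2 trivial)

lemma measure_compl_iUnion_image_towerBase_le {n : ℕ} (hn : 0 < n) {A : Set X}
    (hAm : MeasurableSet A) (hback : ∀ᵐ x ∂μ, ∃ j : ℕ, (T ^ (-j : ℤ)) x ∈ A) :
    μ (⋃ i ∈ Finset.range n, (T ^ (i : ℤ)) '' towerBase T A n)ᶜ ≤ n * μ A :=
  calc μ (⋃ i ∈ Finset.range n, (T ^ (i : ℤ)) '' towerBase T A n)ᶜ
      ≤ μ (⋃ k ∈ Finset.range n, (T ^ (k : ℤ)) ⁻¹' A) :=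
        measure_mono_ae <| hback.mono fun _ hx hxU =>
          (backwardOrbit_subset_tower hn hx).resolve_left hxU
    _ ≤ ∑ k ∈ Finset.range n, μ ((T ^ (k : ℤ)) ⁻¹' A) := measure_biUnion_finset_le _ _
    _ = n * μ A := by
        simp only [measure_zpow_preimage hμ hAm, Finset.sum_const, Finset.card_range, nsmul_eq_mul]

end Measure

end BorelRokhlin

open BorelRokhlin in
/-- Borel Rokhlin lemma (Glasner–Weiss): for a Borel automorphism `T` of a standard
Borel space, `n ≥ 1` and `δ > 0`, there is a single Borel set `B` with
`B, TB, …, T^{n−1}B` pairwise disjoint whose tower has measure `> 1 − δ` for every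
aperiodic ergodic `T`-invariant probability measure. -/
theorem stmt6 {X : Type*} [MeasurableSpace X] [StandardBorelSpace X]
    (T : Equiv.Perm X) (hT : Measurable T) (hT' : Measurable T.symm)
    (n : ℕ) (hn : 1 ≤ n) (δ : ENNReal) (hδ : 0 < δ) :
    ∃ B : Set X, MeasurableSet B ∧
      (∀ i < n, ∀ j < n, i ≠ j → ((⇑T)^[i] '' B) ∩ ((⇑T)^[j] '' B) = ∅) ∧
      ∀ μ : Measure X, IsProbabilityMeasure μ → Ergodic T μ →
        μ {x | ∃ m, 1 ≤ m ∧ (⇑T)^[m] x = x} = 0 →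
        1 - δ < μ (⋃ k ∈ Finset.range n, (⇑T)^[k] '' B) := by
  obtain ⟨e, he⟩ := exists_measurableEmbedding_real X
  -- `1 - δ` is truncated, so the estimate is run with `min δ 1`.
  obtain ⟨K, hK⟩ := ENNReal.exists_inv_nat_lt (a := min δ 1) (by simp [hδ.ne'])
  obtain ⟨A, hAm, hAsep, hAmeets⟩ := exists_marker hT hT' he.measurable he.injective (n * K)
  refine ⟨towerBase T A n, measurableSet_towerBase hT hT' hAm n, fun i hi j hj hij => ?_,
    fun μ _ hE hper => ?_⟩
  · simp only [iterate_eq_zpow, ← disjoint_iff_inter_eq_empty]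
    rcases hij.lt_or_gt with h | h
    exacts [disjoint_image_towerBase h hj, (disjoint_image_towerBase h hi).symm]
  have hμ := measurePreserving_zpow hE.toMeasurePreserving hT'
  have haper : ∀ᵐ x ∂μ, ∃ k : ℤ, (T ^ k) x ∈ A :=
    (measure_eq_zero_iff_ae_notMem.1 hper).mono fun x hx =>
      hAmeets x fun m hm hmx => hx ⟨m, hm, by rwa [iterate_eq_zpow]⟩
  have hback :=
    hE.ae_exists_zpow_neg_mem hμ hAm (measure_ne_zero_of_ae_exists_zpow_mem hμ haper)
  set U := ⋃ k ∈ Finset.range n, (⇑T)^[k] '' towerBase T A n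
  have hUc : μ Uᶜ < min δ 1 := calc
    μ Uᶜ ≤ n * μ A := by
      simpa only [U, iterate_eq_zpow] using
        measure_compl_iUnion_image_towerBase_le hμ hn hAm hback
    _ ≤ (K : ℝ≥0∞)⁻¹ := by
      rw [ENNReal.le_inv_iff_mul_le]
      simpa [mul_right_comm] using hAsep.natCast_mul_measure_le hμ hAm
    _ < min δ 1 := hK
  calc 1 - δ ≤ 1 - min δ 1 := tsub_le_tsub_left (min_le_left _ _) _
    _ < 1 - μ Uᶜ := ((ENNReal.cancel_of_ne ENNReal.one_ne_top).tsub_lt_tsub_iff_left_of_le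
        (ENNReal.cancel_of_ne (ne_top_of_le_ne_top ENNReal.one_ne_top (min_le_right _ _)))
        (min_le_right _ _)).2 hUc
    _ ≤ μ U := tsub_le_iff_right.2 (by simpa using measure_univ_le_add_compl (μ := μ) U)
end

section
/- Let Y be a standard Borel space and P(Y) the space of Borel probability measures on Y with its standard Borel structure. There exists a Borel function F: [0,1] × P(Y) × Y → {0,1} such that for every t ∈ [0,1] and every non-atomic μ ∈ P(Y), μ({y ∈ Y : F(t, μ, y) = 1}) = t. -/
/-!
Embed `Y` Borel-isomorphically into `ℝ` by `e` and take `F(t, μ, y) = 1` iff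
`μ (e ⁻¹' (-∞, e y]) ≤ t`, i.e. iff the distribution function `G` of `e_* μ` satisfies
`G (e y) ≤ t`. For non-atomic `μ` the function `G` is continuous, so `{x | G x ≤ t}` is a closed
down-set of `ℝ`: empty (forcing `t = 0`), all of `ℝ` (forcing `t = 1`), or `(-∞, s]` with
`G s = t`. Joint measurability comes from the measurability of `a ↦ κ a (Prod.mk a ⁻¹' s)`
for the Markov kernel `(t, μ, y) ↦ μ`.
-/

open MeasureTheory

/-- The Borel structure on the space of Borel probability measures, inherited from
the Giry-monad Borel structure on measures (generated by the evaluation maps). -/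
instance probabilityMeasureMeasurableSpace {Y : Type*} [MeasurableSpace Y] :
    MeasurableSpace (ProbabilityMeasure Y) :=
  inferInstanceAs (MeasurableSpace {μ : Measure Y // IsProbabilityMeasure μ})

open ProbabilityTheory Set Filter

lemma Measurable.measure_prodMk_left {α β : Type*} [MeasurableSpace α] [MeasurableSpace β]
    {μ : α → Measure β} [∀ a, IsProbabilityMeasure (μ a)] (hμ : Measurable μ)
    {s : Set (α × β)} (hs : MeasurableSet s) : Measurable fun a => μ a (Prod.mk a ⁻¹' s) :=
  have : IsMarkovKernel ⟨μ, hμ⟩ := ⟨fun a => inferInstanceAs (IsProbabilityMeasure (μ a))⟩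
  Kernel.measurable_kernel_prodMk_left (κ := ⟨μ, hμ⟩) hs

lemma MeasurableEmbedding.nullSingletonClass_map {Y Z : Type*} [MeasurableSpace Y]
    [MeasurableSpace Z] {e : Y → Z} (he : MeasurableEmbedding e) (μ : Measure Y)
    [NullSingletonClass μ] : NullSingletonClass (μ.map e) :=
  ⟨fun x => by
    rw [he.map_apply]
    exact (subsingleton_singleton.preimage he.injective).measure_zero μ⟩

lemma continuous_cdf (ν : Measure ℝ) [IsProbabilityMeasure ν] [NullSingletonClass ν] :
    Continuous (cdf ν) := by
  refine continuous_iff_continuousAt.2 fun x => ?_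
  rw [(monotone_cdf ν).continuousAt_iff_leftLim_eq_rightLim, StieltjesFunction.rightLim_eq]
  have hatom : (cdf ν).measure {x} = 0 := by rw [measure_cdf]; exact measure_singleton x
  rw [StieltjesFunction.measure_singleton, ENNReal.ofReal_eq_zero] at hatom
  linarith [(monotone_cdf ν).leftLim_le (le_refl x)]

lemma measure_setOf_cdf_le (ν : Measure ℝ) [IsProbabilityMeasure ν] [NullSingletonClass ν]
    {t : ℝ} (ht : t ∈ Icc 0 1) : ν {x | cdf ν x ≤ t} = ENNReal.ofReal t := by
  set S := {x | cdf ν x ≤ t}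
  rcases S.eq_empty_or_nonempty with hS | hS
  · have ht0 : t ≤ 0 := ge_of_tendsto' (tendsto_cdf_atBot ν) fun x =>
      (not_le.1 (eq_empty_iff_forall_notMem.1 hS x)).le
    rw [hS, measure_empty, ENNReal.ofReal_of_nonpos ht0]
  by_cases hbdd : BddAbove S
  · have hsS : sSup S ∈ S :=
      (isClosed_le (continuous_cdf ν) continuous_const).csSup_mem hS hbdd
    have hSeq : S = Iic (sSup S) :=
      Subset.antisymm (fun x hx => le_csSup hbdd hx) fun x hx => (monotone_cdf ν hx).trans hsS
    have hts : t ≤ cdf ν (sSup S) :=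
      ge_of_tendsto ((continuous_cdf ν).continuousWithinAt (s := Ioi (sSup S)))
        (eventually_nhdsWithin_of_forall fun x hx =>
          (not_le.1 (notMem_of_csSup_lt (s := S) hx hbdd)).le)
    rw [hSeq, ← ofReal_cdf, le_antisymm hsS hts]
  · have hall : ∀ x, x ∈ S := fun x => by
      obtain ⟨y, hyS, hxy⟩ := not_bddAbove_iff.1 hbdd x
      exact (monotone_cdf ν hxy.le).trans hyS
    have ht1 : 1 ≤ t := le_of_tendsto' (tendsto_cdf_atTop ν) hall
    rw [eq_univ_of_forall hall, measure_univ, le_antisymm ht.2 ht1, ENNReal.ofReal_one]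

lemma MeasurableEmbedding.measure_setOf_measure_preimage_Iic_le {Y : Type*} [MeasurableSpace Y]
    {e : Y → ℝ} (he : MeasurableEmbedding e) (μ : Measure Y) [IsProbabilityMeasure μ]
    [NullSingletonClass μ] {t : ℝ} (ht : t ∈ Icc 0 1) :
    μ {y | μ (e ⁻¹' Iic (e y)) ≤ ENNReal.ofReal t} = ENNReal.ofReal t := by
  have := Measure.isProbabilityMeasure_map (μ := μ) he.measurable.aemeasurable
  have := he.nullSingletonClass_map μ
  have hcdf (y : Y) : μ (e ⁻¹' Iic (e y)) = ENNReal.ofReal (cdf (μ.map e) (e y)) := by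
    rw [ofReal_cdf, he.map_apply]
  simp_rw [hcdf, ENNReal.ofReal_le_ofReal_iff ht.1]
  rw [← measure_setOf_cdf_le (μ.map e) ht, he.map_apply]
  rfl

lemma measurable_decide_measure_preimage_Iic_le {Y : Type*} [MeasurableSpace Y] {e : Y → ℝ}
    (he : Measurable e) :
    Measurable fun p : ℝ × ProbabilityMeasure Y × Y =>
      decide ((p.2.1 : Measure Y) (e ⁻¹' Iic (e p.2.2)) ≤ ENNReal.ofReal p.1) := by
  have hμ : Measurable fun p : ℝ × ProbabilityMeasure Y × Y => (p.2.1 : Measure Y) :=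
    measurable_subtype_coe.comp measurable_snd.fst
  have hle : MeasurableSet {q : (ℝ × ProbabilityMeasure Y × Y) × Y | e q.2 ≤ e q.1.2.2} :=
    measurableSet_le (he.comp measurable_snd) (he.comp measurable_fst.snd.snd)
  refine measurable_to_bool ?_
  simp only [preimage, mem_singleton_iff, decide_eq_true_eq]
  exact measurableSet_le (hμ.measure_prodMk_left hle)
    (ENNReal.measurable_ofReal.comp measurable_fst)

/-- Borel construction of sets of prescribed measure: there is a jointly Borel
function `F : [0,1] × P(Y) × Y → {0,1}` whose section `{y : F(t,μ,y) = 1}` has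
`μ`-measure exactly `t` for every `t ∈ [0,1]` and every non-atomic Borel
probability measure `μ` on the standard Borel space `Y`. -/
theorem stmt7 {Y : Type*} [MeasurableSpace Y] [StandardBorelSpace Y] :
    ∃ F : ℝ → ProbabilityMeasure Y → Y → Bool,
      Measurable (fun p : ℝ × ProbabilityMeasure Y × Y => F p.1 p.2.1 p.2.2) ∧
      ∀ t ∈ Set.Icc (0 : ℝ) 1, ∀ μ : ProbabilityMeasure Y,
        (∀ y : Y, (μ : Measure Y) {y} = 0) →
        (μ : Measure Y) {y | F t μ y = true} = ENNReal.ofReal t := by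
  obtain ⟨e, he⟩ := exists_measurableEmbedding_real Y
  refine ⟨fun t μ y => decide ((μ : Measure Y) (e ⁻¹' Iic (e y)) ≤ ENNReal.ofReal t),
    measurable_decide_measure_preimage_Iic_le he.measurable, fun t ht μ hμ => ?_⟩
  have : NullSingletonClass (μ : Measure Y) := ⟨hμ⟩
  simpa using he.measure_setOf_measure_preimage_Iic_le μ ht
end

section
/- Let X be a one-step mixing shift of finite type. Let a = a₀…a_{p−1} be an X-word and b = b₀…b_{q−1} an X-word such that the symbols a₀,…,a_{p−1}, b₀,…,b_{q−1} are pairwise distinct and, with a' a suffix of a, the word a a b a' is an X-word. Then for every positive multiple m of |b a' a²|, the word w := b a' (b a' a)^m has no self-overlap: for every 0 < k < |w|, the cylinders [w]_X and σ^{−k}[w]_X are disjoint. -/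
/-- The shift map on bi-infinite sequences. -/
def shiftMap {A : Type*} (x : ℤ → A) : ℤ → A := fun n => x (n + 1)

/-- `w` is an `X`-word: it is read at coordinates `0, …, |w|−1` of some point of `X`. -/
def IsWordOf {A : Type*} (X : Set (ℤ → A)) (w : List A) : Prop :=
  ∃ x ∈ X, ∀ i : Fin w.length, x ((i : ℕ) : ℤ) = w.get i

/-- The cylinder `[w]_X` of points of `X` spelling out `w` at coordinates `0, …, |w|−1`. -/
def cylOf {A : Type*} (X : Set (ℤ → A)) (w : List A) : Set (ℤ → A) :=
  {x ∈ X | ∀ i : Fin w.length, x ((i : ℕ) : ℤ) = w.get i}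

/-!
A point of `[w]_X ∩ σ^{-k}[w]_X` makes `k` a period of the word `w`, so it suffices that
`w = u (u a)^m`, `u = b a'`, has no period `0 < k < |w|`. Because the symbols of `a` and `b` are
distinct and `a'` is a suffix of `a`, the first letter `b₀` occurs in `u a` only at its start;
hence `w[k] = w[0] = b₀` forces `k = |u| + j |u a|` with `j < m`. Such a period would match
position `|u|` of `w`, carrying `b₀`, with position `|u| + k`, carrying `a₀ ≠ b₀`.
-/

lemma iterate_shiftMap_apply {A : Type*} (k : ℕ) (x : ℤ → A) (n : ℤ) :
    (shiftMap^[k] x) n = x (n + k) := by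
  induction k generalizing x with
  | zero => simp
  | succ k ih =>
    rw [Function.iterate_succ_apply, ih, shiftMap]
    push_cast
    ring_nf

lemma hasPeriod_of_mem_cylOf {A : Type*} {X : Set (ℤ → A)} {w : List A} {x : ℤ → A} {k : ℕ}
    (hx : x ∈ cylOf X w) (hkx : shiftMap^[k] x ∈ cylOf X w) : w.HasPeriod k := by
  refine List.hasPeriod_iff_getElem?.mpr fun i hi => ?_
  have h₁ := hx.2 ⟨i + k, by omega⟩
  have h₂ := hkx.2 ⟨i, by omega⟩
  simp only [List.get_eq_getElem, iterate_shiftMap_apply, Nat.cast_add] at h₁ h₂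
  rw [List.getElem?_eq_getElem (by omega), List.getElem?_eq_getElem (by omega), ← h₁, ← h₂]

namespace List

variable {α : Type*}

lemma getElem?_flatten_replicate {v : List α} {m i : ℕ} (h : i < m * v.length) :
    (replicate m v).flatten[i]? = v[i % v.length]? := by
  induction m generalizing i with
  | zero => simp at h
  | succ m ih =>
    rw [replicate_succ, flatten_cons]
    by_cases hi : i < v.length
    · rw [getElem?_append_left hi, Nat.mod_eq_of_lt hi]
    · rw [Nat.succ_mul] at h
      rw [getElem?_append_right (by omega), ih (by omega), Nat.mod_eq_sub_mod (a := i) (by omega)]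

lemma eq_zero_of_getElem?_cons_eq {x : α} {t : List α} (hx : x ∉ t) {j : ℕ}
    (h : (x :: t)[j]? = some x) : j = 0 := by
  cases j with
  | zero => rfl
  | succ j =>
    rw [getElem?_cons_succ] at h
    exact absurd (mem_of_getElem? h) hx

end List

section PrefixedPower

open List

variable {α : Type*}

def prefixedPower (u a : List α) (m : ℕ) : List α := u ++ (replicate m (u ++ a)).flatten

variable {u a : List α} {m : ℕ}

lemma length_prefixedPower :
    (prefixedPower u a m).length = u.length + m * (u ++ a).length := by
  simp [prefixedPower]

lemma getElem?_prefixedPower_of_lt {i : ℕ} (hi : i < u.length) :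
    (prefixedPower u a m)[i]? = (u ++ a)[i]? := by
  rw [prefixedPower, getElem?_append_left hi, getElem?_append_left hi]

lemma getElem?_prefixedPower_of_le {i : ℕ} (hi : u.length ≤ i)
    (h : i < (prefixedPower u a m).length) :
    (prefixedPower u a m)[i]? = (u ++ a)[(i - u.length) % (u ++ a).length]? := by
  rw [length_prefixedPower] at h
  rw [prefixedPower, getElem?_append_right hi, getElem?_flatten_replicate (by omega)]

lemma eq_zero_or_eq_add_mul_of_getElem?_prefixedPower_eq {x : α} {s : List α}
    (hx : x ∉ s ++ a) {k : ℕ} (hk : k < (prefixedPower (x :: s) a m).length)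
    (hxk : (prefixedPower (x :: s) a m)[k]? = some x) :
    k = 0 ∨ ∃ j < m, k = (x :: s).length + (x :: s ++ a).length * j := by
  rcases lt_or_ge k (x :: s).length with hks | hks
  · rw [getElem?_prefixedPower_of_lt hks] at hxk
    exact .inl (eq_zero_of_getElem?_cons_eq hx hxk)
  · rw [getElem?_prefixedPower_of_le hks hk] at hxk
    obtain ⟨j, hj⟩ := Nat.dvd_of_mod_eq_zero (eq_zero_of_getElem?_cons_eq hx hxk)
    rw [length_prefixedPower, Nat.mul_comm m] at hk
    exact .inr ⟨j, Nat.lt_of_mul_lt_mul_left (a := (x :: s ++ a).length) (by omega), by omega⟩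

theorem not_hasPeriod_prefixedPower {x : α} {s : List α} (ha : a ≠ []) (hx : x ∉ s ++ a)
    {k : ℕ} (hk : 0 < k) (hkw : k < (prefixedPower (x :: s) a m).length) :
    ¬ (prefixedPower (x :: s) a m).HasPeriod k := by
  intro hper
  replace hper := hasPeriod_iff_getElem?.mp hper
  have hxk : (prefixedPower (x :: s) a m)[k]? = some x := by
    rw [← zero_add k, ← hper 0 (by omega), getElem?_prefixedPower_of_lt (by simp)]
    simp
  obtain h0 | ⟨j, hjm, rfl⟩ := eq_zero_or_eq_add_mul_of_getElem?_prefixedPower_eq hx hkw hxk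
  · omega
  have hsa : (x :: s).length < (x :: s ++ a).length := by
    simpa [Nat.one_le_iff_ne_zero] using ha
  have hlen : (x :: s).length + ((x :: s).length + (x :: s ++ a).length * j) <
      (prefixedPower (x :: s) a m).length := by
    have := Nat.mul_le_mul_left (x :: s ++ a).length hjm
    rw [length_prefixedPower]
    nlinarith
  have key := hper (x :: s).length (by omega)
  rw [getElem?_prefixedPower_of_le le_rfl (by omega), getElem?_prefixedPower_of_le (by omega) hlen,
    add_tsub_cancel_left, Nat.add_mul_mod_self_left, Nat.mod_eq_of_lt hsa,
    getElem?_append_right le_rfl, Nat.sub_self, Nat.zero_mod, cons_append, getElem?_cons_zero] at key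
  exact hx (mem_append_right s (mem_of_getElem? key.symm))

end PrefixedPower

theorem stmt12_general {A : Type*} (X : Set (ℤ → A))
    (a b : List A) (ha : a ≠ []) (hb : b ≠ [])
    (p' : ℕ) (a' : List A) (ha' : a' = a.drop p')
    (hnodup : (a ++ b).Nodup)
    (m : ℕ)
    (w : List A) (hw : w = b ++ a' ++ (List.replicate m (b ++ a' ++ a)).flatten) :
    ∀ k : ℕ, 0 < k → k < w.length →
      cylOf X w ∩ (shiftMap^[k]) ⁻¹' (cylOf X w) = ∅ := by
  intro k hk hkw
  obtain ⟨x, bs, rfl⟩ := List.exists_cons_of_ne_nil hb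
  have hx : x ∉ bs ++ a' ++ a := by
    have hxab : x ∉ a ++ bs := (List.nodup_cons.mp (List.nodup_middle.mp hnodup)).1
    subst ha'
    simp only [List.mem_append, not_or] at hxab ⊢
    exact ⟨⟨hxab.2, fun h => hxab.1 (List.mem_of_mem_drop h)⟩, hxab.1⟩
  subst hw
  exact Set.eq_empty_of_forall_notMem fun y ⟨hy, hky⟩ =>
    not_hasPeriod_prefixedPower ha hx hk hkw (hasPeriod_of_mem_cylOf hy hky)

/-- In a one-step mixing SFT `X`, given words `a`, `b` with pairwise distinct symbols
such that `a a b a'` is an `X`-word (`a'` a suffix of `a`), the word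
`w = b a' (b a' a)^m` (for `m` a positive multiple of `|b a' a²|`) has no
self-overlap: `[w]_X ∩ σ^{−k}[w]_X = ∅` for all `0 < k < |w|`. -/
theorem stmt12 {A : Type*} (X : Set (ℤ → A))
    (hinv : ∀ x ∈ X, shiftMap x ∈ X ∧ (fun n : ℤ => x (n - 1)) ∈ X)
    (E : Set (A × A)) (hSFT : X = {x | ∀ n : ℤ, (x n, x (n + 1)) ∈ E})
    (hmix : ∃ Nmix : ℕ, ∀ u v : List A, IsWordOf X u → IsWordOf X v →
      ∀ n, Nmix ≤ n → ∃ t : List A, t.length = n ∧ IsWordOf X (u ++ t ++ v))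
    (a b : List A) (ha : a ≠ []) (hb : b ≠ [])
    (p' : ℕ) (hp' : 1 ≤ p') (hp'le : p' ≤ a.length) (a' : List A) (ha' : a' = a.drop p')
    (hnodup : (a ++ b).Nodup)
    (haaba' : IsWordOf X (a ++ a ++ b ++ a'))
    (m : ℕ) (hm : 0 < m) (hmult : (b ++ a' ++ a ++ a).length ∣ m)
    (w : List A) (hw : w = b ++ a' ++ (List.replicate m (b ++ a' ++ a)).flatten) :
    ∀ k : ℕ, 0 < k → k < w.length →
      cylOf X w ∩ (shiftMap^[k]) ⁻¹' (cylOf X w) = ∅ :=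
  stmt12_general X a b ha hb p' a' ha' hnodup m w hw
end

section
/- Let X be a mixing shift of finite type with topological entropy h_top(X) > 0, and let w be an X-word of length L such that no two occurrences of w in points of X overlap. Let X_w = ⋂_{n∈ℤ} σ^{−n}(X \ [w]_X) be the subshift of points avoiding w, and suppose there is an equal-length word w̃ such that replacing occurrences of w by w̃ produces X-words in which neither w nor w̃ overlaps itself or the other. Then h_top(X) ≤ h_top(X_w) + (log 2)/L. -/
open Filter Classical

/-- `w` occurs in `x` at position `i`. -/
def occursAt {A : Type*} {L : ℕ} (w : Fin L → A) (x : ℤ → A) (i : ℤ) : Prop :=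
  ∀ j : Fin L, x (i + (j : ℕ)) = w j

/-- `w` is an `X`-word (read at positions `0,…,n−1` of some point of `X`). -/
def isFinWord {A : Type*} (X : Set (ℤ → A)) {n : ℕ} (w : Fin n → A) : Prop :=
  ∃ x ∈ X, ∀ i : Fin n, x ((i : ℕ) : ℤ) = w i

/-- Topological entropy of a subshift: the exponential growth rate of the number of
admissible words. -/
noncomputable def subshiftEntropy {A : Type*} [Fintype A] (X : Set (ℤ → A)) : ℝ :=
  Filter.limsup
    (fun n : ℕ => Real.log (Nat.card {w : Fin n → A // isFinWord X w}) / n) Filter.atTop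

/-- The point obtained from `x` by replacing every occurrence of `w` by the
equal-length word `w̃`. -/
noncomputable def replaceWord {A : Type*} {L : ℕ} (w wt : Fin L → A) (x : ℤ → A) :
    ℤ → A := fun n =>
  if h : ∃ i : ℤ, occursAt w x i ∧ i ≤ n ∧ n < i + L then
    wt ⟨(n - h.choose).toNat, by
      obtain ⟨-, hi, hn⟩ := h.choose_spec; omega⟩
  else x n

/-!
Replacing every occurrence of `w` by `w̃` maps each point `x ∈ X` to a point of `X_w`. On a
window `[0, n)` the word of `x` is recovered from the replaced word, the first and last `L`
symbols of `x`, and one bit per length-`L` block of the window telling whether it contains the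
start of an occurrence of `w` lying inside the window. A block contains at most one start of an
occurrence of `w̃`, since these never overlap, so that bit pins the occurrence down. Hence
`#B_n(X) ≤ #B_n(X_w) · (#A)^{2L} · 2^{n/L + 1}`; taking logarithms, dividing by `n` and passing
to the limsup gives the bound.
-/

section Occurrences

variable {A : Type*} {L : ℕ}

def OccurrencesSeparated (u : Fin L → A) (x : ℤ → A) : Prop :=
  ∀ ⦃i j : ℤ⦄, occursAt u x i → occursAt u x j → i < j + L → j < i + L → i = j

lemma occursAt_shift_iff {u : Fin L → A} {x : ℤ → A} {m k : ℤ} :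
    occursAt u (fun n => x (n + m)) k ↔ occursAt u x (k + m) := by
  simp only [occursAt, add_right_comm]

lemma occursAt.apply_eq_apply {u : Fin L → A} {x x' : ℤ → A} {i p : ℤ}
    (h : occursAt u x i) (h' : occursAt u x' i) (hip : i ≤ p) (hpi : p < i + L) :
    x p = x' p := by
  have hp : p = i + ((p - i).toNat : ℕ) := by omega
  rw [hp, h ⟨_, by omega⟩, h' ⟨_, by omega⟩]

lemma shift_mem_of_forall_shift_mem {X : Set (ℤ → A)}
    (hinv : ∀ x ∈ X, (fun n : ℤ => x (n + 1)) ∈ X ∧ (fun n : ℤ => x (n - 1)) ∈ X)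
    {x : ℤ → A} (hx : x ∈ X) (m : ℤ) : (fun n => x (n + m)) ∈ X := by
  induction m using Int.induction_on with
  | zero => simpa using hx
  | succ k ih => simpa only [add_assoc, add_comm (1 : ℤ)] using (hinv _ ih).1
  | pred k ih => simpa only [sub_eq_add_neg, add_assoc, add_comm (-1 : ℤ)] using (hinv _ ih).2

lemma occurrencesSeparated_of_not_overlap {X : Set (ℤ → A)}
    (hinv : ∀ x ∈ X, (fun n : ℤ => x (n + 1)) ∈ X ∧ (fun n : ℤ => x (n - 1)) ∈ X)
    {u : Fin L → A}
    (hov : ∀ x ∈ X, ∀ k : ℤ, 0 < k → k < L → ¬ (occursAt u x 0 ∧ occursAt u x k))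
    {x : ℤ → A} (hx : x ∈ X) : OccurrencesSeparated u x := by
  suffices ∀ i j, occursAt u x i → occursAt u x j → i < j → j < i + L → False by
    intro i j hi hj hij hji
    by_contra hne
    rcases lt_or_gt_of_ne hne with h | h
    exacts [this i j hi hj h hji, this j i hj hi h hij]
  intro i j hi hj hij hji
  refine hov _ (shift_mem_of_forall_shift_mem hinv hx i) (j - i) (by omega) (by omega) ⟨?_, ?_⟩
  · rwa [occursAt_shift_iff, zero_add]
  · rwa [occursAt_shift_iff, sub_add_cancel]

end Occurrences

section Replacement

variable {A : Type*} {L : ℕ} (w wt : Fin L → A) {x : ℤ → A}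

lemma replaceWord_of_not_covered {p : ℤ}
    (h : ¬ ∃ i : ℤ, occursAt w x i ∧ i ≤ p ∧ p < i + L) : replaceWord w wt x p = x p :=
  dif_neg h

lemma occursAt_replaceWord (hsep : OccurrencesSeparated w x) {i : ℤ} (hi : occursAt w x i) :
    occursAt wt (replaceWord w wt x) i := by
  intro j
  have hex : ∃ i' : ℤ, occursAt w x i' ∧ i' ≤ i + (j : ℕ) ∧ i + (j : ℕ) < i' + L :=
    ⟨i, hi, by omega, by omega⟩
  obtain ⟨hi', hle, hlt⟩ := hex.choose_spec
  have hchoose : hex.choose = i := hsep hi' hi (by omega) (by omega)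
  simp only [replaceWord, dif_pos hex]
  congr 1
  ext
  simp only [hchoose]
  omega

end Replacement

lemma Nat.lt_add_of_div_eq_div {i j L : ℕ} (hL : 0 < L) (h : i / L = j / L) : i < j + L := by
  have hi := Nat.lt_div_mul_add (a := i) hL
  have hj := Nat.div_mul_le_self j L
  rw [h] at hi
  omega

section Coding

variable {A : Type*} {L : ℕ} (w wt : Fin L → A)

def occurrenceBlocks (x : ℤ → A) (n : ℕ) : Set (Fin (n / L + 1)) :=
  {k | ∃ i : ℕ, i / L = k ∧ i + L ≤ n ∧ occursAt w x i}

variable {n : ℕ} {x₁ x₂ : ℤ → A}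

lemma apply_eq_apply_of_occursAt (hsep₁ : OccurrencesSeparated w x₁)
    (hsep₂ : OccurrencesSeparated w x₂) (hsep : OccurrencesSeparated wt (replaceWord w wt x₂))
    (hy : ∀ p : ℤ, 0 ≤ p → p < n → replaceWord w wt x₁ p = replaceWord w wt x₂ p)
    (hblocks : occurrenceBlocks w x₁ n ⊆ occurrenceBlocks w x₂ n)
    {i p : ℤ} (hi : occursAt w x₁ i) (h0 : 0 ≤ i) (hn : i + L ≤ n) (hip : i ≤ p)
    (hpi : p < i + L) : x₁ p = x₂ p := by
  lift i to ℕ using h0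
  have hblock : i / L < n / L + 1 := Nat.lt_succ_of_le (Nat.div_le_div_right (by omega))
  obtain ⟨j, hij, -, hj⟩ := hblocks (a := ⟨i / L, hblock⟩) ⟨i, rfl, by omega, hi⟩
  have hwt₁ : occursAt wt (replaceWord w wt x₂) i := fun t =>
    (hy _ (by omega) (by omega)).symm.trans (occursAt_replaceWord w wt hsep₁ hi t)
  have hwt₂ : occursAt wt (replaceWord w wt x₂) j := occursAt_replaceWord w wt hsep₂ hj
  have hL : 0 < L := by omega
  have hij : (i : ℤ) = j := hsep hwt₁ hwt₂
    (by exact_mod_cast Nat.lt_add_of_div_eq_div hL hij.symm)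
    (by exact_mod_cast Nat.lt_add_of_div_eq_div hL hij)
  rw [← hij] at hj
  exact hi.apply_eq_apply hj hip hpi

lemma apply_eq_apply_of_replaceWord_eq (hsep₁ : OccurrencesSeparated w x₁)
    (hsep₂ : OccurrencesSeparated w x₂)
    (hsep₁' : OccurrencesSeparated wt (replaceWord w wt x₁))
    (hsep₂' : OccurrencesSeparated wt (replaceWord w wt x₂))
    (hy : ∀ p : ℤ, 0 ≤ p → p < n → replaceWord w wt x₁ p = replaceWord w wt x₂ p)
    (hblocks : occurrenceBlocks w x₁ n = occurrenceBlocks w x₂ n)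
    (hleft : ∀ j : Fin L, x₁ (j : ℕ) = x₂ (j : ℕ))
    (hright : ∀ j : Fin L, x₁ (n - L + (j : ℕ)) = x₂ (n - L + (j : ℕ)))
    {p : ℤ} (h0 : 0 ≤ p) (hn : p < n) : x₁ p = x₂ p := by
  by_cases hl : p < L
  · simpa [show ((p.toNat : ℕ) : ℤ) = p by omega] using hleft ⟨p.toNat, by omega⟩
  by_cases hr : n - L ≤ p
  · have h := hright ⟨(p - (n - L)).toNat, by omega⟩
    rwa [show (n - L + ((p - (n - L)).toNat : ℕ) : ℤ) = p by omega] at h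
  by_cases hc₁ : ∃ i, occursAt w x₁ i ∧ i ≤ p ∧ p < i + L
  · obtain ⟨i, hi, hip, hpi⟩ := hc₁
    exact apply_eq_apply_of_occursAt w wt hsep₁ hsep₂ hsep₂' hy hblocks.subset hi
      (by omega) (by omega) hip hpi
  by_cases hc₂ : ∃ i, occursAt w x₂ i ∧ i ≤ p ∧ p < i + L
  · obtain ⟨i, hi, hip, hpi⟩ := hc₂
    exact (apply_eq_apply_of_occursAt w wt hsep₂ hsep₁ hsep₁' (fun q h0 hn => (hy q h0 hn).symm)
      hblocks.symm.subset hi (by omega) (by omega) hip hpi).symm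
  rw [← replaceWord_of_not_covered w wt hc₁, ← replaceWord_of_not_covered w wt hc₂]
  exact hy p h0 hn

end Coding

section Counting

variable {A : Type*} [Fintype A] {L : ℕ}

lemma card_words_le_card_words_replaced {X : Set (ℤ → A)} {w wt : Fin L → A}
    (hw : ∀ x ∈ X, OccurrencesSeparated w x) (hwt : ∀ x ∈ X, OccurrencesSeparated wt x)
    (hrepl : ∀ x ∈ X, replaceWord w wt x ∈ X ∧ ∀ i : ℤ, ¬ occursAt w (replaceWord w wt x) i)
    (n : ℕ) :
    Nat.card {u : Fin n → A // isFinWord X u} ≤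
      Nat.card {v : Fin n → A // isFinWord {x ∈ X | ∀ i : ℤ, ¬ occursAt w x i} v} *
        (Fintype.card A ^ L) ^ 2 * 2 ^ (n / L + 1) := by
  set Y := {x ∈ X | ∀ i : ℤ, ¬ occursAt w x i}
  let code (u : {u : Fin n → A // isFinWord X u}) :
      {v : Fin n → A // isFinWord Y v} × (Fin L → A) × (Fin L → A) × Set (Fin (n / L + 1)) :=
    let x := u.2.choose
    (⟨fun q => replaceWord w wt x (q : ℕ), _, hrepl x u.2.choose_spec.1, fun _ => rfl⟩,
      fun j => x (j : ℕ), fun j => x (n - L + (j : ℕ)), occurrenceBlocks w x n)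
  have hcode : Function.Injective code := by
    rintro ⟨u₁, hu₁⟩ ⟨u₂, hu₂⟩ h
    obtain ⟨hx₁, hxu₁⟩ := hu₁.choose_spec
    obtain ⟨hx₂, hxu₂⟩ := hu₂.choose_spec
    simp only [code, Prod.mk.injEq, Subtype.ext_iff, funext_iff] at h
    obtain ⟨hy, hleft, hright, hblocks⟩ := h
    ext q
    change u₁ q = u₂ q
    rw [← hxu₁ q, ← hxu₂ q]
    refine apply_eq_apply_of_replaceWord_eq w wt (hw _ hx₁) (hw _ hx₂)
      (hwt _ (hrepl _ hx₁).1) (hwt _ (hrepl _ hx₂).1) (fun p h0 hn => ?_) hblocks hleft hright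
      (by omega) (by omega)
    simpa [show ((p.toNat : ℕ) : ℤ) = p by omega] using hy ⟨p.toNat, by omega⟩
  calc Nat.card {u : Fin n → A // isFinWord X u}
      ≤ Nat.card ({v : Fin n → A // isFinWord Y v} × (Fin L → A) × (Fin L → A) ×
          Set (Fin (n / L + 1))) := Nat.card_le_card_of_injective code hcode
    _ = _ := by
      rw [Nat.card_prod, Nat.card_prod, Nat.card_prod, Nat.card_fun,
        Nat.card_eq_fintype_card (α := Set _), Fintype.card_set]
      simp only [Nat.card_eq_fintype_card, Fintype.card_fin]
      ring

end Counting

section Growth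

lemma Real.log_natCast_le_log_natCast {a b : ℕ} (h : a ≤ b) : Real.log a ≤ Real.log b := by
  rcases a.eq_zero_or_pos with rfl | ha
  · simpa using Real.log_natCast_nonneg b
  · exact Real.log_le_log (by exact_mod_cast ha) (by exact_mod_cast h)

lemma Real.log_natCast_le_add_of_le_mul {a b c : ℕ} (h : a ≤ b * c) :
    Real.log a ≤ Real.log b + Real.log c := by
  rcases a.eq_zero_or_pos with rfl | ha
  · simpa using add_nonneg (Real.log_natCast_nonneg b) (Real.log_natCast_nonneg c)
  · have hbc : b * c ≠ 0 := by omega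
    calc Real.log a ≤ Real.log (b * c : ℕ) := Real.log_natCast_le_log_natCast h
      _ = Real.log b + Real.log c := by
        push_cast
        exact Real.log_mul (by exact_mod_cast left_ne_zero_of_mul hbc)
          (by exact_mod_cast right_ne_zero_of_mul hbc)

lemma log_div_le_of_le_mul_two_pow {a b M n L : ℕ} (h : a ≤ b * M * 2 ^ (n / L + 1)) :
    Real.log a / n ≤ Real.log b / n + (Real.log 2 / L + (Real.log M + Real.log 2) / n) := by
  have hlog2 : 0 ≤ Real.log 2 := Real.log_nonneg one_le_two
  rcases n.eq_zero_or_pos with rfl | hn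
  · simpa using div_nonneg hlog2 L.cast_nonneg
  have hcount : Real.log a ≤ Real.log b + Real.log M + ((n / L : ℕ) + 1) * Real.log 2 := by
    have h₁ := Real.log_natCast_le_add_of_le_mul h
    have h₂ := Real.log_natCast_le_add_of_le_mul (le_refl (b * M))
    push_cast [Real.log_pow] at h₁ h₂
    linarith
  have hblocks : ((n / L : ℕ) : ℝ) * Real.log 2 ≤ Real.log 2 / L * n := by
    rw [div_mul_eq_mul_div, mul_comm, mul_div_assoc]
    exact mul_le_mul_of_nonneg_left Nat.cast_div_le hlog2
  have hn' : (0 : ℝ) < n := by exact_mod_cast hn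
  rw [div_le_iff₀ hn', add_mul, add_mul, div_mul_cancel₀ _ hn'.ne', div_mul_cancel₀ _ hn'.ne']
  linarith

lemma log_card_words_div_le {A : Type*} [Fintype A] (Y : Set (ℤ → A)) (n : ℕ) :
    Real.log (Nat.card {v : Fin n → A // isFinWord Y v}) / n ≤ Real.log (Fintype.card A) := by
  rcases n.eq_zero_or_pos with rfl | hn
  · simpa using Real.log_natCast_nonneg _
  have hcard : Nat.card {v : Fin n → A // isFinWord Y v} ≤ Fintype.card A ^ n := by
    simpa using Finite.card_subtype_le (isFinWord Y)
  rw [div_le_iff₀ (by exact_mod_cast hn)]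
  calc Real.log (Nat.card {v : Fin n → A // isFinWord Y v})
      ≤ Real.log (Fintype.card A ^ n : ℕ) := Real.log_natCast_le_log_natCast hcard
    _ = Real.log (Fintype.card A) * n := by push_cast; rw [Real.log_pow, mul_comm]

lemma limsup_le_limsup_add_of_le_add_div {f g : ℕ → ℝ} {B c C : ℝ} (hf : ∀ n, 0 ≤ f n)
    (hg₀ : ∀ n, 0 ≤ g n) (hgB : ∀ n, g n ≤ B) (h : ∀ n, f n ≤ g n + (c + C / n)) :
    limsup f atTop ≤ limsup g atTop + c := by
  have hv : Tendsto (fun n : ℕ => c + C / n) atTop (nhds c) := by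
    simpa using tendsto_const_nhds.add (tendsto_const_div_atTop_nhds_zero_nat C)
  have hgbdd : IsBoundedUnder (· ≤ ·) atTop g := isBoundedUnder_of ⟨B, hgB⟩
  calc limsup f atTop ≤ limsup (g + fun n : ℕ => c + C / n) atTop :=
        limsup_le_limsup (Eventually.of_forall h) (isCoboundedUnder_le_of_le atTop hf)
          (isBoundedUnder_le_add hgbdd hv.isBoundedUnder_le)
    _ ≤ limsup g atTop + limsup (fun n : ℕ => c + C / n) atTop :=
        limsup_add_le (isBoundedUnder_of ⟨0, hg₀⟩) hgbdd hv.isCoboundedUnder_le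
          hv.isBoundedUnder_le
    _ = limsup g atTop + c := by rw [hv.limsup_eq]

end Growth

theorem stmt13_general {A : Type*} [Fintype A] (X : Set (ℤ → A))
    (hinv : ∀ x ∈ X, (fun n : ℤ => x (n + 1)) ∈ X ∧ (fun n : ℤ => x (n - 1)) ∈ X)
    (L : ℕ) (w wt : Fin L → A)
    (hov : ∀ u ∈ ({w, wt} : Set (Fin L → A)), ∀ v ∈ ({w, wt} : Set (Fin L → A)),
      ∀ x ∈ X, ∀ k : ℤ, 0 < k → k < L → ¬ (occursAt u x 0 ∧ occursAt v x k))
    (hrepl : ∀ x ∈ X, replaceWord w wt x ∈ X ∧ ∀ i : ℤ, ¬ occursAt w (replaceWord w wt x) i) :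
    subshiftEntropy X ≤
      subshiftEntropy {x ∈ X | ∀ i : ℤ, ¬ occursAt w x i} + Real.log 2 / L := by
  have hsep : ∀ u ∈ ({w, wt} : Set (Fin L → A)), ∀ x ∈ X, OccurrencesSeparated u x :=
    fun u hu _ hx => occurrencesSeparated_of_not_overlap hinv (hov u hu u hu) hx
  have hcount := card_words_le_card_words_replaced (hsep w (by simp)) (hsep wt (by simp)) hrepl
  exact limsup_le_limsup_add_of_le_add_div
    (fun n => div_nonneg (Real.log_natCast_nonneg _) n.cast_nonneg)
    (fun n => div_nonneg (Real.log_natCast_nonneg _) n.cast_nonneg)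
    (log_card_words_div_le _) (fun n => log_div_le_of_le_mul_two_pow (hcount n))

/-- If `X` is a mixing SFT with positive entropy, `w` a non-self-overlapping `X`-word
of length `L`, and `w̃` an equal-length word such that replacing occurrences of `w`
by `w̃` produces points of `X` avoiding `w`, with no overlaps among `w, w̃`, then
`h_top(X) ≤ h_top(X_w) + (log 2)/L`, where `X_w` is the subshift of points of `X`
avoiding `w`. -/
theorem stmt13 {A : Type*} [Fintype A] (X : Set (ℤ → A))
    (hinv : ∀ x ∈ X, (fun n : ℤ => x (n + 1)) ∈ X ∧ (fun n : ℤ => x (n - 1)) ∈ X)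
    (E : Set (A × A)) (hSFT : X = {x | ∀ n : ℤ, (x n, x (n + 1)) ∈ E})
    (hmix : ∃ Nmix : ℕ, ∀ (nu nv : ℕ) (u : Fin nu → A) (v : Fin nv → A),
      isFinWord X u → isFinWord X v → ∀ n, Nmix ≤ n →
        ∃ x ∈ X, (∀ i : Fin nu, x ((i : ℕ) : ℤ) = u i) ∧
          ∀ i : Fin nv, x ((nu + n + (i : ℕ) : ℕ) : ℤ) = v i)
    (hpos : 0 < subshiftEntropy X)
    (L : ℕ) (hL : 1 ≤ L) (w wt : Fin L → A) (hword : isFinWord X w)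
    (hov : ∀ u ∈ ({w, wt} : Set (Fin L → A)), ∀ v ∈ ({w, wt} : Set (Fin L → A)),
      ∀ x ∈ X, ∀ k : ℤ, 0 < k → k < L → ¬ (occursAt u x 0 ∧ occursAt v x k))
    (hrepl : ∀ x ∈ X, replaceWord w wt x ∈ X ∧ ∀ i : ℤ, ¬ occursAt w (replaceWord w wt x) i) :
    subshiftEntropy X ≤
      subshiftEntropy {x ∈ X | ∀ i : ℤ, ¬ occursAt w x i} + Real.log 2 / L :=
  stmt13_general X hinv L w wt hov hrepl
end

section
/- Let (X, S) be a Borel dynamical system that is almost Borel strictly universal for the class B(t) of Borel systems with all ergodic invariant measure entropies < t. Then for any nonempty set I ⊆ ℝ, the product system (X × I, S × id) is almost Borel isomorphic to (X, S). -/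
open MeasureTheory

/-- A (standard) Borel dynamical system: a Borel automorphism of a standard Borel space. -/
structure BorelSys : Type 1 where
  carrier : Type
  mble : MeasurableSpace carrier
  std : @StandardBorelSpace carrier mble
  map : carrier ≃ carrier
  meas : @Measurable carrier carrier mble mble map
  meas_symm : @Measurable carrier carrier mble mble map.symm

attribute [instance] BorelSys.mble BorelSys.std

/-- The set of periodic points of an automorphism. -/
def perSet {α : Type*} (S : α ≃ α) : Set α := {x | ∃ n, 1 ≤ n ∧ (⇑S)^[n] x = x}

/-- A set is almost full if it has full measure for every aperiodic ergodic
invariant probability measure (i.e. its complement is almost null). -/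
def AlmostFull {α : Type*} [MeasurableSpace α] (S : α ≃ α) (B : Set α) : Prop :=
  ∀ μ : Measure α, IsProbabilityMeasure μ → Ergodic S μ → μ (perSet S) = 0 → μ B = 1

/-- `Z` almost Borel embeds into `W`. -/
def ABEmbeds (Z W : BorelSys) : Prop :=
  ∃ (X' : Set Z.carrier) (f : Z.carrier → W.carrier),
    MeasurableSet X' ∧ (∀ x ∈ X', Z.map x ∈ X' ∧ Z.map.symm x ∈ X') ∧
    AlmostFull Z.map X' ∧ Measurable f ∧ Set.InjOn f X' ∧
    ∀ x ∈ X', f (Z.map x) = W.map (f x)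

/-- `Z` and `W` are almost Borel isomorphic. -/
def ABIso (Z W : BorelSys) : Prop :=
  ∃ (X' : Set Z.carrier) (Y' : Set W.carrier)
    (f : Z.carrier → W.carrier) (g : W.carrier → Z.carrier),
    MeasurableSet X' ∧ MeasurableSet Y' ∧
    (∀ x ∈ X', Z.map x ∈ X' ∧ Z.map.symm x ∈ X') ∧
    (∀ y ∈ Y', W.map y ∈ Y' ∧ W.map.symm y ∈ Y') ∧
    AlmostFull Z.map X' ∧ AlmostFull W.map Y' ∧
    Measurable f ∧ Measurable g ∧ f '' X' = Y' ∧
    (∀ x ∈ X', g (f x) = x) ∧ (∀ y ∈ Y', f (g y) = y) ∧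
    ∀ x ∈ X', f (Z.map x) = W.map (f x)

/-- Entropy of `μ` relative to a finite partition coded by `P : α → Fin k`. -/
noncomputable def partitionEntropy {α : Type*} [MeasurableSpace α] (S : α → α)
    (μ : Measure α) {k : ℕ} (P : α → Fin k) : ℝ :=
  Filter.limsup (fun n : ℕ =>
    (∑ w : Fin (n + 1) → Fin k,
      Real.negMulLog ((μ {x | ∀ i : Fin (n + 1), P (S^[(i : ℕ)] x) = w i}).toReal)) / n)
    Filter.atTop

/-- Kolmogorov–Sinai entropy: supremum over finite measurable partitions. -/
noncomputable def kolSinai {α : Type*} [MeasurableSpace α] (S : α → α)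
    (μ : Measure α) : ENNReal :=
  ⨆ (k : ℕ) (P : {P : α → Fin k // Measurable P}), ENNReal.ofReal (partitionEntropy S μ P.1)

/-- The class `B(t)` of Borel systems all of whose ergodic invariant probability
measures have entropy `< t`. -/
def inClassB (t : ENNReal) (Z : BorelSys) : Prop :=
  ∀ μ : Measure Z.carrier, IsProbabilityMeasure μ → Ergodic Z.map μ → kolSinai Z.map μ < t

/-!
An ergodic measure on `X × I` for `S × id` lives on a single fibre `X × {c}`, so every partition
of `X × I` has the entropy of the induced partition of `X`; hence `X × I` lies in `B(t)` and
almost Borel embeds into `X`. Conversely `z ↦ (z, c₀)` embeds `X` into `X × I`, and a dynamical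
Cantor–Bernstein argument turns the two embeddings into an almost Borel isomorphism. Shrinking
both domains along a decreasing sequence of invariant almost full sets makes each embedding map
into the domain of the other; almost fullness survives because an injective equivariant map
pushes aperiodic ergodic measures to aperiodic ergodic measures. On the shrunken domains the
Borel Schröder–Bernstein construction applies, and its pieces are invariant because both maps
are equivariant.
-/

open Set Function

section Invariant

variable {α β : Type*}

theorem Equiv.forall_apply_mem_and_symm_apply_mem_iff (e : α ≃ α) {s : Set α} :
    (∀ x ∈ s, e x ∈ s ∧ e.symm x ∈ s) ↔ ⇑e ⁻¹' s = s := by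
  refine ⟨fun h => Subset.antisymm (fun x hx => by simpa using (h _ hx).2) fun x hx => (h x hx).1,
    fun h x hx => ⟨by rwa [← h] at hx, by rw [← h]; simpa using hx⟩⟩

theorem Equiv.preimage_image_eq_of_forall_apply_eq {TA : α ≃ α} {TB : β ≃ β} {f : α → β}
    {s : Set α} (hs : ⇑TA ⁻¹' s = s) (hf : ∀ x ∈ s, f (TA x) = TB (f x)) :
    ⇑TB ⁻¹' (f '' s) = f '' s := by
  have hs' : TA '' s = s := ((TA.preimage_eq_iff_eq_image s s).1 hs).symm
  rw [TB.preimage_eq_iff_eq_image, image_image, ← image_congr fun x hx => hf x hx,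
    ← image_image f TA s, hs']

end Invariant

section Dynamics

variable {α β : Type*} [MeasurableSpace α] [MeasurableSpace β]

theorem Ergodic.map_of_ae_semiconj {μ : Measure α} {T : α → α} {U : β → β} {f : α → β}
    (h : Ergodic T μ) (hf : Measurable f) (hU : Measurable U)
    (hfTU : ∀ᵐ x ∂μ, f (T x) = U (f x)) : Ergodic U (μ.map f) where
  measurable := hU
  map_eq := by
    rw [Measure.map_map hU hf,
      Measure.map_congr (show U ∘ f =ᵐ[μ] f ∘ T from hfTU.mono fun x hx => hx.symm),
      ← Measure.map_map hf h.measurable, h.map_eq]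
  aeconst_set s hs hUs := by
    rw [← (hf.measurePreserving μ).aeconst_preimage hs.nullMeasurableSet]
    refine h.quasiErgodic.aeconst_set₀ (hf hs).nullMeasurableSet (Filter.eventuallyEq_set.2 ?_)
    filter_upwards [hfTU] with x hx
    rw [mem_preimage, mem_preimage, hx, ← mem_preimage (f := U), hUs, mem_preimage]

theorem measurableSet_perSet [MeasurableEq α] {T : α ≃ α} (hT : Measurable T) :
    MeasurableSet (perSet T) :=
  measurableSet_setOfPred.2 <| .exists fun n => measurable_const.and <|
    measurableSet_setOfPred.1 <| measurableSet_eq_fun (hT.iterate n) measurable_id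

theorem map_perSet_eq_zero [MeasurableEq β] {TA : α ≃ α} {TB : β ≃ β} (hTB : Measurable TB)
    {X : Set α} (hX : ⇑TA ⁻¹' X = X) {f : α → β} (hf : Measurable f) (hinj : InjOn f X)
    (hfT : ∀ x ∈ X, f (TA x) = TB (f x)) {μ : Measure α} (hμX : ∀ᵐ x ∂μ, x ∈ X)
    (hμ : μ (perSet TA) = 0) : μ.map f (perSet TB) = 0 := by
  rw [Measure.map_apply hf (measurableSet_perSet hTB)]
  refine measure_mono_null_ae ?_ hμ
  filter_upwards [hμX] with x hx ⟨n, hn, hfx⟩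
  have hiter : ∀ k, (⇑TA)^[k] x ∈ X ∧ f ((⇑TA)^[k] x) = (⇑TB)^[k] (f x) := by
    intro k
    induction k with
    | zero => exact ⟨hx, rfl⟩
    | succ k ih =>
      rw [iterate_succ_apply', iterate_succ_apply', ← ih.2, ← hfT _ ih.1]
      exact ⟨(Set.ext_iff.1 hX _).2 ih.1, rfl⟩
  exact ⟨n, hn, hinj (hiter n).1 hx ((hiter n).2.trans hfx)⟩

theorem almostFull_iff {S : α ≃ α} {B : Set α} (hB : MeasurableSet B) :
    AlmostFull S B ↔ ∀ μ : Measure α, IsProbabilityMeasure μ → Ergodic S μ →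
      μ (perSet S) = 0 → ∀ᵐ x ∂μ, x ∈ B :=
  forall_congr' fun _ => forall_congr' fun _ => by rw [← mem_ae_iff_prob_eq_one hB]; rfl

theorem AlmostFull.iInter {ι : Sort*} [Countable ι] {S : α ≃ α} {B : ι → Set α}
    (hB : ∀ i, MeasurableSet (B i)) (h : ∀ i, AlmostFull S (B i)) : AlmostFull S (⋂ i, B i) :=
  (almostFull_iff (.iInter hB)).2 fun μ hμ herg hper =>
    countable_iInter_mem.2 fun i => (almostFull_iff (hB i)).1 (h i) μ hμ herg hper

theorem Measurable.exists_measurable_leftInvOn [StandardBorelSpace α]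
    [MeasurableSpace.CountablySeparated β] {f : α → β} {s : Set α} (hf : Measurable f)
    (hs : MeasurableSet s) (hinj : InjOn f s) (hne : β → Nonempty α) :
    ∃ g : β → α, Measurable g ∧ LeftInvOn g f s := by
  have := hs.standardBorel
  obtain ⟨g, hg, hgf⟩ := (Measurable.measurableEmbedding (f := s.domRestrict f)
    (hf.comp measurable_subtype_coe) (injOn_iff_injective.1 hinj)).exists_measurable_extend
    measurable_subtype_coe hne
  exact ⟨g, hg, fun x hx => congrFun hgf ⟨x, hx⟩⟩

theorem partitionEntropy_congr {S : α → α} {T : β → β} {μ : Measure α} {ν : Measure β} {k : ℕ}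
    {P : α → Fin k} {Q : β → Fin k}
    (h : ∀ n (w : Fin (n + 1) → Fin k), μ {x | ∀ i : Fin (n + 1), P (S^[i] x) = w i} =
      ν {y | ∀ i : Fin (n + 1), Q (T^[i] y) = w i}) :
    partitionEntropy S μ P = partitionEntropy T ν Q := by
  simp only [partitionEntropy, h]

theorem kolSinai_prodMap_id_le {S : α → α} (hS : Measurable S) {μ : Measure (α × β)} {c : β}
    (hc : ∀ᵐ p ∂μ, p.2 = c) : kolSinai (Prod.map S id) μ ≤ kolSinai S (μ.map Prod.fst) := by
  refine iSup₂_le fun k P => le_iSup₂_of_le k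
    ⟨fun z => P.1 (z, c), P.2.comp measurable_prodMk_right⟩
    (congrArg ENNReal.ofReal (partitionEntropy_congr fun n w => ?_)).le
  have hcyl : MeasurableSet {z | ∀ i : Fin (n + 1), P.1 (S^[i] z, c) = w i} := by
    rw [ofPred_forall]
    exact .iInter fun i =>
      (P.2.comp (measurable_prodMk_right.comp (hS.iterate i))) (measurableSet_singleton (w i))
  rw [Measure.map_apply measurable_fst hcyl]
  refine measure_congr (Filter.eventuallyEq_set.2 ?_)
  filter_upwards [hc] with p hp
  simp only [Prod.map_iterate, iterate_id]
  subst hp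
  rfl

end Dynamics

section SchroederBernstein

variable {α β : Type*} {f : α → β} {g : β → α} {X : Set α} {Y : Set β}

/-- The Schröder–Bernstein bijection is `f` on this set and `g⁻¹` off it. -/
def schroederBernsteinSet (f : α → β) (g : β → α) (X : Set α) (Y : Set β) : Set α :=
  ⋃ n : ℕ, (g ∘ f)^[n] '' (X \ g '' Y)

theorem iterate_comp_image_sdiff_image_subset (hfXY : MapsTo f X Y) (hgYX : MapsTo g Y X)
    (n : ℕ) : (g ∘ f)^[n] '' (X \ g '' Y) ⊆ X :=
  (((hgYX.comp hfXY).iterate n).mono_left sdiff_subset).image_subset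

theorem schroederBernsteinSet_subset (hfXY : MapsTo f X Y) (hgYX : MapsTo g Y X) :
    schroederBernsteinSet f g X Y ⊆ X :=
  iUnion_subset (iterate_comp_image_sdiff_image_subset hfXY hgYX)

theorem mem_image_of_notMem_schroederBernsteinSet {x : α} (hx : x ∈ X)
    (hxC : x ∉ schroederBernsteinSet f g X Y) : x ∈ g '' Y := by
  by_contra hxg
  exact hxC (mem_iUnion.2 ⟨0, x, ⟨hx, hxg⟩, rfl⟩)

theorem apply_mem_schroederBernsteinSet {x : α} (hx : x ∈ schroederBernsteinSet f g X Y) :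
    g (f x) ∈ schroederBernsteinSet f g X Y := by
  obtain ⟨n, y, hy, rfl⟩ := mem_iUnion.1 hx
  exact mem_iUnion.2 ⟨n + 1, y, hy, by rw [iterate_succ_apply']; rfl⟩

theorem mem_image_of_apply_mem_schroederBernsteinSet (hfXY : MapsTo f X Y)
    (hgYX : MapsTo g Y X) (hginj : InjOn g Y) {y : β} (hy : y ∈ Y)
    (hgy : g y ∈ schroederBernsteinSet f g X Y) : y ∈ f '' schroederBernsteinSet f g X Y := by
  obtain ⟨n, x, hx, hxy⟩ := mem_iUnion.1 hgy
  cases n with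
  | zero => exact absurd ⟨y, hy, hxy.symm⟩ hx.2
  | succ n =>
    rw [iterate_succ_apply'] at hxy
    have hxX := iterate_comp_image_sdiff_image_subset hfXY hgYX n (mem_image_of_mem _ hx)
    exact ⟨_, mem_iUnion.2 ⟨n, x, hx, rfl⟩, hginj (hfXY hxX) hy hxy⟩

theorem measurableSet_schroederBernsteinSet [MeasurableSpace α] [StandardBorelSpace α]
    [MeasurableSpace β] [StandardBorelSpace β] (hX : MeasurableSet X) (hY : MeasurableSet Y)
    (hf : Measurable f) (hg : Measurable g) (hfinj : InjOn f X) (hginj : InjOn g Y)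
    (hfXY : MapsTo f X Y) (hgYX : MapsTo g Y X) :
    MeasurableSet (schroederBernsteinSet f g X Y) := by
  refine .iUnion fun n => ?_
  induction n with
  | zero =>
    rw [iterate_zero, image_id]
    exact hX.diff (hY.image_of_measurable_injOn hg hginj)
  | succ n ih =>
    have hsub := iterate_comp_image_sdiff_image_subset hfXY hgYX n
    rw [iterate_succ', image_comp, image_comp]
    exact (ih.image_of_measurable_injOn hf (hfinj.mono hsub)).image_of_measurable_injOn hg
      (hginj.mono ((hfXY.mono_left hsub).image_subset))

theorem preimage_schroederBernsteinSet {TA : α ≃ α} {TB : β ≃ β} (hX : ⇑TA ⁻¹' X = X)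
    (hY : ⇑TB ⁻¹' Y = Y) (hfT : ∀ x ∈ X, f (TA x) = TB (f x))
    (hgT : ∀ y ∈ Y, g (TB y) = TA (g y)) (hfXY : MapsTo f X Y) (hgYX : MapsTo g Y X) :
    ⇑TA ⁻¹' schroederBernsteinSet f g X Y = schroederBernsteinSet f g X Y := by
  rw [schroederBernsteinSet, preimage_iUnion]
  refine iUnion_congr fun n => ?_
  induction n with
  | zero => rw [iterate_zero, image_id, preimage_sdiff, hX,
      Equiv.preimage_image_eq_of_forall_apply_eq hY hgT]
  | succ n ih =>
    have hsub := iterate_comp_image_sdiff_image_subset hfXY hgYX n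
    rw [iterate_succ', image_comp, image_comp]
    refine Equiv.preimage_image_eq_of_forall_apply_eq
      (Equiv.preimage_image_eq_of_forall_apply_eq ih fun x hx => hfT x (hsub hx))
      fun y hy => hgT y ((hfXY.mono_left hsub).image_subset hy)

theorem invOn_piecewise_schroederBernsteinSet {f' : β → α} {g' : α → β}
    [∀ x, Decidable (x ∈ schroederBernsteinSet f g X Y)]
    [∀ y, Decidable (y ∈ f '' schroederBernsteinSet f g X Y)]
    (hfXY : MapsTo f X Y) (hgYX : MapsTo g Y X) (hginj : InjOn g Y)
    (hff' : LeftInvOn f' f X) (hgg' : LeftInvOn g' g Y) :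
    InvOn ((f '' schroederBernsteinSet f g X Y).piecewise f' g)
      ((schroederBernsteinSet f g X Y).piecewise f g') X Y := by
  have hCX := schroederBernsteinSet_subset hfXY hgYX
  constructor
  · intro x hx
    by_cases hxC : x ∈ schroederBernsteinSet f g X Y
    · rw [piecewise_eq_of_mem _ _ _ hxC, piecewise_eq_of_mem _ _ _ (mem_image_of_mem f hxC)]
      exact hff' (hCX hxC)
    · obtain ⟨y, hy, rfl⟩ := mem_image_of_notMem_schroederBernsteinSet hx hxC
      have hyC : y ∉ f '' schroederBernsteinSet f g X Y := fun ⟨c, hc, hcy⟩ =>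
        hxC (hcy ▸ apply_mem_schroederBernsteinSet hc)
      rw [piecewise_eq_of_notMem _ _ _ hxC, hgg' hy, piecewise_eq_of_notMem _ _ _ hyC]
  · intro y hy
    by_cases hyC : y ∈ f '' schroederBernsteinSet f g X Y
    · obtain ⟨c, hc, rfl⟩ := hyC
      rw [piecewise_eq_of_mem _ _ _ (mem_image_of_mem f hc), hff' (hCX hc),
        piecewise_eq_of_mem _ _ _ hc]
    · have hgyC : g y ∉ schroederBernsteinSet f g X Y := fun h =>
        hyC (mem_image_of_apply_mem_schroederBernsteinSet hfXY hgYX hginj hy h)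
      rw [piecewise_eq_of_notMem _ _ _ hyC, piecewise_eq_of_notMem _ _ _ hgyC, hgg' hy]

theorem bijOn_piecewise_schroederBernsteinSet {f' : β → α} {g' : α → β}
    [∀ x, Decidable (x ∈ schroederBernsteinSet f g X Y)]
    [∀ y, Decidable (y ∈ f '' schroederBernsteinSet f g X Y)]
    (hfXY : MapsTo f X Y) (hgYX : MapsTo g Y X) (hginj : InjOn g Y)
    (hff' : LeftInvOn f' f X) (hgg' : LeftInvOn g' g Y) :
    BijOn ((schroederBernsteinSet f g X Y).piecewise f g') X Y := by
  have hCX := schroederBernsteinSet_subset hfXY hgYX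
  refine (invOn_piecewise_schroederBernsteinSet hfXY hgYX hginj hff' hgg').bijOn
    (fun x hx => ?_) fun y hy => ?_
  · by_cases hxC : x ∈ schroederBernsteinSet f g X Y
    · rw [piecewise_eq_of_mem _ _ _ hxC]
      exact hfXY hx
    · obtain ⟨y, hy, rfl⟩ := mem_image_of_notMem_schroederBernsteinSet hx hxC
      rwa [piecewise_eq_of_notMem _ _ _ hxC, hgg' hy]
  · by_cases hyC : y ∈ f '' schroederBernsteinSet f g X Y
    · obtain ⟨c, hc, rfl⟩ := hyC
      rw [piecewise_eq_of_mem _ _ _ (mem_image_of_mem f hc), hff' (hCX hc)]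
      exact hCX hc
    · rw [piecewise_eq_of_notMem _ _ _ hyC]
      exact hgYX hy

end SchroederBernstein

structure IsABEmbedding (Z W : BorelSys) (X : Set Z.carrier) (f : Z.carrier → W.carrier) :
    Prop where
  measurableSet : MeasurableSet X
  preimage_eq : ⇑Z.map ⁻¹' X = X
  almostFull : AlmostFull Z.map X
  measurable : Measurable f
  injOn : InjOn f X
  map_apply : ∀ x ∈ X, f (Z.map x) = W.map (f x)

theorem abEmbeds_iff {Z W : BorelSys} : ABEmbeds Z W ↔ ∃ X f, IsABEmbedding Z W X f := by
  simp only [ABEmbeds, Equiv.forall_apply_mem_and_symm_apply_mem_iff]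
  exact exists₂_congr fun X f =>
    ⟨fun ⟨h₁, h₂, h₃, h₄, h₅, h₆⟩ => ⟨h₁, h₂, h₃, h₄, h₅, h₆⟩,
      fun ⟨h₁, h₂, h₃, h₄, h₅, h₆⟩ => ⟨h₁, h₂, h₃, h₄, h₅, h₆⟩⟩

namespace IsABEmbedding

variable {Z W : BorelSys} {X : Set Z.carrier} {f : Z.carrier → W.carrier}
  {Y : Set W.carrier} {g : W.carrier → Z.carrier}

theorem ae_mem (hf : IsABEmbedding Z W X f) {μ : Measure Z.carrier} [IsProbabilityMeasure μ]
    (hμ : Ergodic Z.map μ) (hper : μ (perSet Z.map) = 0) : ∀ᵐ x ∂μ, x ∈ X :=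
  (almostFull_iff hf.measurableSet).1 hf.almostFull μ inferInstance hμ hper

theorem almostFull_preimage (hf : IsABEmbedding Z W X f) (hY : MeasurableSet Y)
    (hYfull : AlmostFull W.map Y) : AlmostFull Z.map (f ⁻¹' Y) := by
  intro μ hprob hμ hper
  have hX := hf.ae_mem hμ hper
  have hν := hμ.map_of_ae_semiconj hf.measurable W.meas <|
    hX.mono fun x hx => hf.map_apply x hx
  have := hYfull _ (Measure.isProbabilityMeasure_map hf.measurable.aemeasurable) hν
    (map_perSet_eq_zero W.meas hf.preimage_eq hf.measurable hf.injOn hf.map_apply hX hper)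
  rwa [Measure.map_apply hf.measurable hY] at this

theorem inter_preimage (hf : IsABEmbedding Z W X f) (hg : IsABEmbedding W Z Y g) :
    IsABEmbedding Z W (X ∩ f ⁻¹' Y) f where
  measurableSet := hf.measurableSet.inter (hf.measurable hg.measurableSet)
  preimage_eq := by
    ext x
    have hX := Set.ext_iff.1 hf.preimage_eq x
    have hY := Set.ext_iff.1 hg.preimage_eq (f x)
    simp only [mem_preimage, mem_inter_iff] at hX hY ⊢
    rw [hX]
    exact and_congr_right fun hx => by rw [hf.map_apply x hx, hY]
  almostFull := (almostFull_iff (hf.measurableSet.inter (hf.measurable hg.measurableSet))).2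
    fun μ hprob hμ hper => Filter.inter_mem
      ((almostFull_iff hf.measurableSet).1 hf.almostFull μ hprob hμ hper)
      ((almostFull_iff (hf.measurable hg.measurableSet)).1
        (hf.almostFull_preimage hg.measurableSet hg.almostFull) μ hprob hμ hper)
  measurable := hf.measurable
  injOn := hf.injOn.mono inter_subset_left
  map_apply x hx := hf.map_apply x hx.1

theorem iInter {X : ℕ → Set Z.carrier} (h : ∀ n, IsABEmbedding Z W (X n) f) :
    IsABEmbedding Z W (⋂ n, X n) f where
  measurableSet := .iInter fun n => (h n).measurableSet
  preimage_eq := by rw [preimage_iInter]; exact iInter_congr fun n => (h n).preimage_eq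
  almostFull := .iInter (fun n => (h n).measurableSet) fun n => (h n).almostFull
  measurable := (h 0).measurable
  injOn := (h 0).injOn.mono (iInter_subset _ 0)
  map_apply x hx := (h 0).map_apply x (mem_iInter.1 hx 0)

theorem exists_mapsTo (hf : IsABEmbedding Z W X f) (hg : IsABEmbedding W Z Y g) :
    ∃ X' Y', IsABEmbedding Z W X' f ∧ IsABEmbedding W Z Y' g ∧ MapsTo f X' Y' ∧
      MapsTo g Y' X' := by
  let P : ℕ → Set Z.carrier × Set W.carrier :=
    fun n => n.rec (X, Y) fun _ p => (p.1 ∩ f ⁻¹' p.2, p.2 ∩ g ⁻¹' p.1)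
  have hP : ∀ n, IsABEmbedding Z W (P n).1 f ∧ IsABEmbedding W Z (P n).2 g := by
    intro n
    induction n with
    | zero => exact ⟨hf, hg⟩
    | succ n ih => exact ⟨ih.1.inter_preimage ih.2, ih.2.inter_preimage ih.1⟩
  exact ⟨⋂ n, (P n).1, ⋂ n, (P n).2, .iInter fun n => (hP n).1, .iInter fun n => (hP n).2,
    fun x hx => mem_iInter.2 fun n => (mem_iInter.1 hx (n + 1)).2,
    fun y hy => mem_iInter.2 fun n => (mem_iInter.1 hy (n + 1)).2⟩

end IsABEmbedding

theorem ABIso.of_isABEmbedding_of_mapsTo {Z W : BorelSys} {X : Set Z.carrier}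
    {f : Z.carrier → W.carrier} {Y : Set W.carrier} {g : W.carrier → Z.carrier}
    (hf : IsABEmbedding Z W X f) (hg : IsABEmbedding W Z Y g) (hfXY : MapsTo f X Y)
    (hgYX : MapsTo g Y X) : ABIso Z W := by
  classical
  obtain ⟨f', hf', hff'⟩ :=
    hf.measurable.exists_measurable_leftInvOn hf.measurableSet hf.injOn fun y => ⟨g y⟩
  obtain ⟨g', hg', hgg'⟩ :=
    hg.measurable.exists_measurable_leftInvOn hg.measurableSet hg.injOn fun x => ⟨f x⟩
  have hC := measurableSet_schroederBernsteinSet hf.measurableSet hg.measurableSet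
    hf.measurable hg.measurable hf.injOn hg.injOn hfXY hgYX
  have hCZ := preimage_schroederBernsteinSet hf.preimage_eq hg.preimage_eq hf.map_apply
    hg.map_apply hfXY hgYX
  have hCX := schroederBernsteinSet_subset hfXY hgYX
  have hinv := invOn_piecewise_schroederBernsteinSet hfXY hgYX hg.injOn hff' hgg'
  refine ⟨X, Y, _, _, hf.measurableSet, hg.measurableSet,
    (Equiv.forall_apply_mem_and_symm_apply_mem_iff _).2 hf.preimage_eq,
    (Equiv.forall_apply_mem_and_symm_apply_mem_iff _).2 hg.preimage_eq,
    hf.almostFull, hg.almostFull, hf.measurable.piecewise hC hg',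
    hf'.piecewise (hC.image_of_measurable_injOn hf.measurable (hf.injOn.mono hCX)) hg.measurable,
    (bijOn_piecewise_schroederBernsteinSet hfXY hgYX hg.injOn hff' hgg').image_eq,
    hinv.1, hinv.2, fun x hx => ?_⟩
  have hZC : Z.map x ∈ schroederBernsteinSet f g X Y ↔ x ∈ schroederBernsteinSet f g X Y :=
    Set.ext_iff.1 hCZ x
  by_cases hxC : x ∈ schroederBernsteinSet f g X Y
  · rw [piecewise_eq_of_mem _ _ _ hxC, piecewise_eq_of_mem _ _ _ (hZC.2 hxC), hf.map_apply x hx]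
  · obtain ⟨y, hy, rfl⟩ := mem_image_of_notMem_schroederBernsteinSet hx hxC
    rw [piecewise_eq_of_notMem _ _ _ hxC, piecewise_eq_of_notMem _ _ _ (hZC.not.2 hxC),
      ← hg.map_apply y hy, hgg' ((Set.ext_iff.1 hg.preimage_eq y).2 hy), hgg' hy]

theorem ABIso.of_abEmbeds {Z W : BorelSys} (h₁ : ABEmbeds Z W) (h₂ : ABEmbeds W Z) :
    ABIso Z W := by
  obtain ⟨X, f, hf⟩ := abEmbeds_iff.1 h₁
  obtain ⟨Y, g, hg⟩ := abEmbeds_iff.1 h₂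
  obtain ⟨X', Y', hf', hg', hfXY, hgYX⟩ := hf.exists_mapsTo hg
  exact ABIso.of_isABEmbedding_of_mapsTo hf' hg' hfXY hgYX

def BorelSys.prodId (Z : BorelSys) (Y : Type) [MeasurableSpace Y] [StandardBorelSpace Y] :
    BorelSys where
  carrier := Z.carrier × Y
  mble := inferInstance
  std := inferInstance
  map := Z.map.prodCongr (Equiv.refl Y)
  meas := Z.meas.prodMap measurable_id
  meas_symm := Z.meas_symm.prodMap measurable_id

theorem BorelSys.abEmbeds_prodId (Z : BorelSys) {Y : Type} [MeasurableSpace Y]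
    [StandardBorelSpace Y] (y : Y) : ABEmbeds Z (Z.prodId Y) :=
  ⟨univ, fun z => (z, y), .univ, fun _ _ => ⟨trivial, trivial⟩, fun _ _ _ _ => measure_univ,
    measurable_prodMk_right, fun _ _ _ _ h => congrArg Prod.fst h, fun _ _ => rfl⟩

theorem inClassB.prodId {t : ENNReal} {Z : BorelSys} (h : inClassB t Z) (Y : Type)
    [MeasurableSpace Y] [StandardBorelSpace Y] : inClassB t (Z.prodId Y) := by
  intro μ hprob hμ
  have : IsProbabilityMeasure (μ : Measure (Z.carrier × Y)) := hprob
  have : Nonempty Y := (nonempty_of_isProbabilityMeasure μ).map Prod.snd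
  obtain ⟨c, hc⟩ := hμ.ae_eq_const_of_ae_eq_comp measurable_snd rfl
  have hν : Ergodic Z.map (μ.map Prod.fst) :=
    (measurable_fst.measurePreserving μ).ergodic_of_ergodic_semiconj hμ Z.meas fun _ => rfl
  exact (kolSinai_prodMap_id_le Z.meas hc).trans_lt
    (h _ (Measure.isProbabilityMeasure_map (μ := (μ : Measure (Z.carrier × Y)))
      measurable_fst.aemeasurable) hν)

/-- If `(X, S)` is almost Borel strictly universal for `B(t)`, then for any nonempty
(Borel) `I ⊆ ℝ`, the product system `(X × I, S × id)` is almost Borel isomorphic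
to `(X, S)`. -/
theorem stmt16 (t : ENNReal) (Z : BorelSys) (hmem : inClassB t Z)
    (huniv : ∀ W : BorelSys, inClassB t W → ABEmbeds W Z)
    (I : Set ℝ) (hne : I.Nonempty) (hImeas : MeasurableSet I) :
    ABIso
      { carrier := Z.carrier × ↥I
        mble := inferInstance
        std := by haveI := hImeas.standardBorel; infer_instance
        map := (Z.map).prodCongr (Equiv.refl ↥I)
        meas := by exact Z.meas.prodMap measurable_id
        meas_symm := by exact Z.meas_symm.prodMap measurable_id }
      Z := by
  have := hImeas.standardBorel
  exact ABIso.of_abEmbeds (huniv _ (hmem.prodId I)) (Z.abEmbeds_prodId ⟨_, hne.some_mem⟩)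
end
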